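/- arXiv:2506.02174 — 6 statements merged into one kernel-verified Lean document; each statement's English description precedes it below -/
import Mathlib

section
/- Let z = (x,y) ∈ Z = ℝ₊ⁿ × ℝᵐ. Then for any R ≥ ‖z‖₂ and any r ∈ (0, R], one has (1/√(1+R²))·KKT(z) ≤ ρ_r(z) ≤ dist₂(0, F(z)). -/
open Matrix
open scoped BigOperators

noncomputable section

/-- Euclidean norm of a vector in `ℝᵏ`. -/
def nrm {k : ℕ} (v : Fin k → ℝ) : ℝ := Real.sqrt (v ⬝ᵥ v)

/-- Euclidean norm of a primal-dual pair `z = (x, y) ∈ ℝⁿ × ℝᵐ`. -/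
def nrmP {n m : ℕ} (z : (Fin n → ℝ) × (Fin m → ℝ)) : ℝ :=
  Real.sqrt (z.1 ⬝ᵥ z.1 + z.2 ⬝ᵥ z.2)

/-- Spectral norm `‖A‖₂` of a matrix: the supremum of `‖Ax‖₂` over unit vectors `x`. -/
def specNorm {n m : ℕ} (A : Matrix (Fin m) (Fin n) ℝ) : ℝ :=
  sSup {r | ∃ x : Fin n → ℝ, nrm x = 1 ∧ r = nrm (A *ᵥ x)}

/-- Componentwise positive part `[v]⁺`. -/
def posPt {k : ℕ} (v : Fin k → ℝ) : Fin k → ℝ := fun i => max (v i) 0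

/-- The Lagrangian `L(x,y) = cᵀx − yᵀAx + bᵀy` of the standard-form LP. -/
def Lag {n m : ℕ} (A : Matrix (Fin m) (Fin n) ℝ) (b : Fin m → ℝ) (c : Fin n → ℝ)
    (x : Fin n → ℝ) (y : Fin m → ℝ) : ℝ :=
  c ⬝ᵥ x - y ⬝ᵥ (A *ᵥ x) + b ⬝ᵥ y

/-- One PDHG iteration with (equal) step-size `η`:
`x⁺ = proj_{ℝ₊ⁿ}(x + ηAᵀy − ηc)`, `y⁺ = y − ηA(2x⁺ − x) + ηb`. -/
def pdhgStep {n m : ℕ} (A : Matrix (Fin m) (Fin n) ℝ) (b : Fin m → ℝ) (c : Fin n → ℝ)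
    (η : ℝ) (z : (Fin n → ℝ) × (Fin m → ℝ)) : (Fin n → ℝ) × (Fin m → ℝ) :=
  let x' := posPt (z.1 + η • (Aᵀ *ᵥ z.2) - η • c)
  (x', z.2 - η • (A *ᵥ ((2 : ℝ) • x' - z.1)) + η • b)

/-- Quadratic form `wᵀPw` of `P = [[(1/η)Iₙ, Aᵀ], [A, (1/η)Iₘ]]`. -/
def Pquad {n m : ℕ} (A : Matrix (Fin m) (Fin n) ℝ) (η : ℝ)
    (w : (Fin n → ℝ) × (Fin m → ℝ)) : ℝ :=
  (1 / η) * (w.1 ⬝ᵥ w.1) + 2 * (w.2 ⬝ᵥ (A *ᵥ w.1)) + (1 / η) * (w.2 ⬝ᵥ w.2)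

/-- The seminorm `‖w‖_P = √(wᵀPw)`. -/
def Pnorm {n m : ℕ} (A : Matrix (Fin m) (Fin n) ℝ) (η : ℝ)
    (w : (Fin n → ℝ) × (Fin m → ℝ)) : ℝ := Real.sqrt (Pquad A η w)

/-- `σ_max(P)`: the largest eigenvalue of the symmetric matrix `P`, i.e. the
supremum of the Rayleigh quotient `wᵀPw` over unit vectors `w`. -/
def sigmaMaxP {n m : ℕ} (A : Matrix (Fin m) (Fin n) ℝ) (η : ℝ) : ℝ :=
  sSup {r | ∃ w : (Fin n → ℝ) × (Fin m → ℝ), nrmP w = 1 ∧ r = Pquad A η w}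

/-- Application of the matrix `P`: `Pw = ((1/η)w₁ + Aᵀw₂, Aw₁ + (1/η)w₂)`. -/
def Papply {n m : ℕ} (A : Matrix (Fin m) (Fin n) ℝ) (η : ℝ)
    (w : (Fin n → ℝ) × (Fin m → ℝ)) : (Fin n → ℝ) × (Fin m → ℝ) :=
  ((1 / η) • w.1 + Aᵀ *ᵥ w.2, A *ᵥ w.1 + (1 / η) • w.2)

/-- The set `Z*` of saddle points of `L` over `Z = ℝ₊ⁿ × ℝᵐ`:
`L(x*, y) ≤ L(x*, y*) ≤ L(x, y*)` for all `(x, y) ∈ Z`. -/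
def saddleSet {n m : ℕ} (A : Matrix (Fin m) (Fin n) ℝ) (b : Fin m → ℝ) (c : Fin n → ℝ) :
    Set ((Fin n → ℝ) × (Fin m → ℝ)) :=
  {z | (∀ i, 0 ≤ z.1 i) ∧
    (∀ y : Fin m → ℝ, Lag A b c z.1 y ≤ Lag A b c z.1 z.2) ∧
    (∀ x : Fin n → ℝ, (∀ i, 0 ≤ x i) → Lag A b c z.1 z.2 ≤ Lag A b c x z.2)}

/-- Euclidean distance `dist₂(z, S)` from `z` to a set `S`. -/
def dist2 {n m : ℕ} (z : (Fin n → ℝ) × (Fin m → ℝ))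
    (S : Set ((Fin n → ℝ) × (Fin m → ℝ))) : ℝ :=
  sInf ((fun w => nrmP (z - w)) '' S)

/-- `P`-seminorm distance `dist_P(z, S)` from `z` to a set `S`. -/
def distP {n m : ℕ} (A : Matrix (Fin m) (Fin n) ℝ) (η : ℝ)
    (z : (Fin n → ℝ) × (Fin m → ℝ)) (S : Set ((Fin n → ℝ) × (Fin m → ℝ))) : ℝ :=
  sInf ((fun w => Pnorm A η (z - w)) '' S)

/-- KKT error `KKT(z) = ‖(Ax − b, [Aᵀy − c]⁺, [cᵀx − bᵀy]⁺)‖₂`. -/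
def KKTerr {n m : ℕ} (A : Matrix (Fin m) (Fin n) ℝ) (b : Fin m → ℝ) (c : Fin n → ℝ)
    (z : (Fin n → ℝ) × (Fin m → ℝ)) : ℝ :=
  Real.sqrt ((A *ᵥ z.1 - b) ⬝ᵥ (A *ᵥ z.1 - b)
    + posPt (Aᵀ *ᵥ z.2 - c) ⬝ᵥ posPt (Aᵀ *ᵥ z.2 - c)
    + (max (c ⬝ᵥ z.1 - b ⬝ᵥ z.2) 0) ^ 2)

/-- Normalized duality gap `ρ_r(z) = sup_{ẑ ∈ W_r(z)} (L(x, ŷ) − L(x̂, y)) / r`,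
where `W_r(z) = {ẑ ∈ Z : ‖z − ẑ‖₂ ≤ r}`. -/
def rhoGap {n m : ℕ} (A : Matrix (Fin m) (Fin n) ℝ) (b : Fin m → ℝ) (c : Fin n → ℝ)
    (r : ℝ) (z : (Fin n → ℝ) × (Fin m → ℝ)) : ℝ :=
  sSup {g | ∃ w : (Fin n → ℝ) × (Fin m → ℝ), (∀ i, 0 ≤ w.1 i) ∧ nrmP (z - w) ≤ r ∧
    g = (Lag A b c z.1 w.2 - Lag A b c w.1 z.2) / r}

/-- The subdifferential operator
`F(z) = {(c − Aᵀy + g, Ax − b) : g ∈ N_{ℝ₊ⁿ}(x)}`, where `N_{ℝ₊ⁿ}(x)` is the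
normal cone of `ℝ₊ⁿ` at `x ∈ ℝ₊ⁿ` (the set is empty if `x ∉ ℝ₊ⁿ`). -/
def Fop {n m : ℕ} (A : Matrix (Fin m) (Fin n) ℝ) (b : Fin m → ℝ) (c : Fin n → ℝ)
    (z : (Fin n → ℝ) × (Fin m → ℝ)) : Set ((Fin n → ℝ) × (Fin m → ℝ)) :=
  {w | (∀ i, 0 ≤ z.1 i) ∧ ∃ g : Fin n → ℝ,
    (∀ u : Fin n → ℝ, (∀ i, 0 ≤ u i) → g ⬝ᵥ (u - z.1) ≤ 0) ∧
    w = (c - Aᵀ *ᵥ z.2 + g, A *ᵥ z.1 - b)}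

/-- `dist₂(0, F(z)) = inf {‖w‖₂ : w ∈ F(z)}`. -/
def distF {n m : ℕ} (A : Matrix (Fin m) (Fin n) ℝ) (b : Fin m → ℝ) (c : Fin n → ℝ)
    (z : (Fin n → ℝ) × (Fin m → ℝ)) : ℝ :=
  sInf (nrmP '' Fop A b c z)

end


section auxLemmas
open Matrix


lemma dotSelfNonneg {k : ℕ} (v : Fin k → ℝ) : 0 ≤ v ⬝ᵥ v :=
  Finset.sum_nonneg fun i _ => mul_self_nonneg _

lemma dotCS {k : ℕ} (a u : Fin k → ℝ) :
    a ⬝ᵥ u ≤ Real.sqrt (a ⬝ᵥ a) * Real.sqrt (u ⬝ᵥ u) := by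
  have h := Finset.sum_mul_sq_le_sq_mul_sq Finset.univ a u
  calc a ⬝ᵥ u ≤ Real.sqrt ((a ⬝ᵥ u) ^ 2) := by
        rw [Real.sqrt_sq_eq_abs]; exact le_abs_self _
    _ ≤ Real.sqrt ((a ⬝ᵥ a) * (u ⬝ᵥ u)) := by
        apply Real.sqrt_le_sqrt
        simpa [dotProduct, pow_two] using h
    _ = _ := Real.sqrt_mul (dotSelfNonneg a) _

lemma twoCS (p q s t : ℝ) (hp : 0 ≤ p) (hq : 0 ≤ q) (hs : 0 ≤ s) (ht : 0 ≤ t) :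
    p * q + s * t ≤ Real.sqrt (p ^ 2 + s ^ 2) * Real.sqrt (q ^ 2 + t ^ 2) := by
  have h1 : (p * q + s * t) ^ 2 ≤ (p ^ 2 + s ^ 2) * (q ^ 2 + t ^ 2) := by
    nlinarith [sq_nonneg (p * t - s * q)]
  calc p * q + s * t = Real.sqrt ((p * q + s * t) ^ 2) := by
        rw [Real.sqrt_sq (by positivity)]
    _ ≤ Real.sqrt ((p ^ 2 + s ^ 2) * (q ^ 2 + t ^ 2)) := Real.sqrt_le_sqrt h1
    _ = _ := Real.sqrt_mul (by positivity) _

lemma pairCS {n m : ℕ} (a u : Fin n → ℝ) (b v : Fin m → ℝ) :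
    a ⬝ᵥ u + b ⬝ᵥ v ≤ Real.sqrt (a ⬝ᵥ a + b ⬝ᵥ b) * Real.sqrt (u ⬝ᵥ u + v ⬝ᵥ v) := by
  have h1 := dotCS a u
  have h2 := dotCS b v
  have h3 := twoCS (Real.sqrt (a ⬝ᵥ a)) (Real.sqrt (u ⬝ᵥ u)) (Real.sqrt (b ⬝ᵥ b))
    (Real.sqrt (v ⬝ᵥ v)) (Real.sqrt_nonneg _) (Real.sqrt_nonneg _) (Real.sqrt_nonneg _)
    (Real.sqrt_nonneg _)
  rw [Real.sq_sqrt (dotSelfNonneg a), Real.sq_sqrt (dotSelfNonneg u),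
    Real.sq_sqrt (dotSelfNonneg b), Real.sq_sqrt (dotSelfNonneg v)] at h3
  linarith

lemma gapEq {n m : ℕ} (A : Matrix (Fin m) (Fin n) ℝ) (b : Fin m → ℝ) (c : Fin n → ℝ)
    (x d1 : Fin n → ℝ) (y d2 : Fin m → ℝ) :
    Lag A b c x (y - d2) - Lag A b c (x - d1) y
      = (c - Aᵀ *ᵥ y) ⬝ᵥ d1 + (A *ᵥ x - b) ⬝ᵥ d2 := by
  have h1 : (Aᵀ *ᵥ y) ⬝ᵥ d1 = y ⬝ᵥ (A *ᵥ d1) := by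
    rw [Matrix.mulVec_transpose, ← Matrix.dotProduct_mulVec]
  have h2 : (A *ᵥ x) ⬝ᵥ d2 = d2 ⬝ᵥ (A *ᵥ x) := dotProduct_comm _ _
  simp only [Lag, Matrix.mulVec_sub, sub_dotProduct, dotProduct_sub]
  linarith

lemma dotPosPt {k : ℕ} (v : Fin k → ℝ) : v ⬝ᵥ posPt v = posPt v ⬝ᵥ posPt v := by
  unfold dotProduct posPt
  apply Finset.sum_congr rfl
  intro i _
  rcases le_or_gt (v i) 0 with h | h
  · simp [max_eq_right h]
  · simp [max_eq_left h.le]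

lemma maxMulSelf (a : ℝ) : max a 0 * a = max a 0 ^ 2 := by
  rcases le_or_gt a 0 with h | h
  · simp [max_eq_right h]
  · rw [max_eq_left h.le]; ring

end auxLemmas

set_option maxHeartbeats 1000000

/-- for `z ∈ Z = ℝ₊ⁿ × ℝᵐ`, any `R ≥ ‖z‖₂` and `r ∈ (0, R]`:
`(1/√(1+R²))·KKT(z) ≤ ρ_r(z) ≤ dist₂(0, F(z))`. -/
theorem stmt0 {n m : ℕ} (A : Matrix (Fin m) (Fin n) ℝ) (b : Fin m → ℝ) (c : Fin n → ℝ)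
    (z : (Fin n → ℝ) × (Fin m → ℝ)) (hz : ∀ i, 0 ≤ z.1 i)
    (R r : ℝ) (hR : nrmP z ≤ R) (hr0 : 0 < r) (hrR : r ≤ R) :
    (1 / Real.sqrt (1 + R ^ 2)) * KKTerr A b c z ≤ rhoGap A b c r z ∧
    rhoGap A b c r z ≤ distF A b c z := by

  obtain ⟨x, y⟩ := z
  simp only at hz
  have hKKT : KKTerr A b c (x, y) = Real.sqrt ((A *ᵥ x - b) ⬝ᵥ (A *ᵥ x - b)
      + posPt (Aᵀ *ᵥ y - c) ⬝ᵥ posPt (Aᵀ *ᵥ y - c) + (max (c ⬝ᵥ x - b ⬝ᵥ y) 0) ^ 2) := rfl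
  set p : Fin m → ℝ := A *ᵥ x - b with hp
  set q : Fin n → ℝ := posPt (Aᵀ *ᵥ y - c) with hq
  set l3 : ℝ := max (c ⬝ᵥ x - b ⬝ᵥ y) 0 with hl3
  set K : ℝ := Real.sqrt (p ⬝ᵥ p + q ⬝ᵥ q + l3 ^ 2) with hKdef
  rw [hKKT]
  set S : Set ℝ := {g | ∃ w : (Fin n → ℝ) × (Fin m → ℝ), (∀ i, 0 ≤ w.1 i) ∧
      nrmP ((x, y) - w) ≤ r ∧ g = (Lag A b c x w.2 - Lag A b c w.1 y) / r} with hS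
  have hrho : rhoGap A b c r (x, y) = sSup S := rfl
  rw [hrho]
  -- the key upper bound
  have key : ∀ w : (Fin n → ℝ) × (Fin m → ℝ), (∀ i, 0 ≤ w.1 i) → nrmP ((x, y) - w) ≤ r →
      ∀ v ∈ Fop A b c (x, y), (Lag A b c x w.2 - Lag A b c w.1 y) / r ≤ nrmP v := by
    intro w hw1 hwr v hv
    obtain ⟨-, gN, hgN, hveq⟩ := hv
    set d1 : Fin n → ℝ := x - w.1 with hd1
    set d2 : Fin m → ℝ := y - w.2 with hd2
    have hw1' : w.1 = x - d1 := by rw [hd1]; abel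
    have hw2' : w.2 = y - d2 := by rw [hd2]; abel
    have hgap := gapEq A b c x d1 y d2
    rw [← hw1', ← hw2', ← hp] at hgap
    have hgN0 : 0 ≤ gN ⬝ᵥ d1 := by
      have h := hgN w.1 hw1
      have h2 : gN ⬝ᵥ (w.1 - x) = -(gN ⬝ᵥ d1) := by
        rw [show w.1 - x = -d1 by rw [hd1]; abel, dotProduct_neg]
      simp only at h
      rw [h2] at h
      linarith
    have hle1 : Lag A b c x w.2 - Lag A b c w.1 y ≤ (c - Aᵀ *ᵥ y + gN) ⬝ᵥ d1 + p ⬝ᵥ d2 := by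
      rw [hgap, add_dotProduct]
      linarith
    have hle2 : (c - Aᵀ *ᵥ y + gN) ⬝ᵥ d1 + p ⬝ᵥ d2
        ≤ nrmP v * Real.sqrt (d1 ⬝ᵥ d1 + d2 ⬝ᵥ d2) := by
      have := pairCS (c - Aᵀ *ᵥ y + gN) d1 p d2
      rw [hveq]
      exact this
    have hnw : nrmP ((x, y) - w) = Real.sqrt (d1 ⬝ᵥ d1 + d2 ⬝ᵥ d2) := rfl
    rw [div_le_iff₀ hr0]
    calc Lag A b c x w.2 - Lag A b c w.1 y
        ≤ nrmP v * Real.sqrt (d1 ⬝ᵥ d1 + d2 ⬝ᵥ d2) := le_trans hle1 hle2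
      _ ≤ nrmP v * r := by
          apply mul_le_mul_of_nonneg_left _ (Real.sqrt_nonneg _)
          rw [← hnw]; exact hwr
  have hw0 : ((c - Aᵀ *ᵥ y, p) : (Fin n → ℝ) × (Fin m → ℝ)) ∈ Fop A b c (x, y) := by
    refine ⟨hz, 0, fun u hu => by simp, by simp [hp]⟩
  have hS0 : (0 : ℝ) ∈ S := by
    refine ⟨(x, y), hz, ?_, by simp⟩
    have : ((x, y) : (Fin n → ℝ) × (Fin m → ℝ)) - (x, y) = 0 := sub_self _
    rw [this]
    simp only [nrmP]
    norm_num
    linarith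
  have hBdd : BddAbove S := by
    refine ⟨nrmP ((c - Aᵀ *ᵥ y, p) : (Fin n → ℝ) × (Fin m → ℝ)), ?_⟩
    rintro g ⟨w, h1, h2, rfl⟩
    exact key w h1 h2 _ hw0
  have hSne : S.Nonempty := ⟨0, hS0⟩
  constructor
  · -- lower bound
    have hK0 : 0 ≤ K := Real.sqrt_nonneg _
    have hsum0 : 0 ≤ p ⬝ᵥ p + q ⬝ᵥ q + l3 ^ 2 :=
      add_nonneg (add_nonneg (dotSelfNonneg p) (dotSelfNonneg q)) (sq_nonneg l3)
    have hKsq : K ^ 2 = p ⬝ᵥ p + q ⬝ᵥ q + l3 ^ 2 := Real.sq_sqrt hsum0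
    rcases hK0.eq_or_lt with hK | hK
    · rw [← hK, mul_zero]
      exact le_csSup hBdd hS0
    · have hR0 : 0 < R := lt_of_lt_of_le hr0 hrR
      have hsq : 0 < Real.sqrt (1 + R ^ 2) := Real.sqrt_pos.2 (by positivity)
      have hRsq : R ≤ Real.sqrt (1 + R ^ 2) := by
        calc R = Real.sqrt (R ^ 2) := (Real.sqrt_sq hR0.le).symm
          _ ≤ _ := Real.sqrt_le_sqrt (by linarith)
      have hl30 : 0 ≤ l3 := le_max_right _ _
      have hl3K : l3 ≤ K := by
        calc l3 = Real.sqrt (l3 ^ 2) := (Real.sqrt_sq hl30).symm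
          _ ≤ K := Real.sqrt_le_sqrt (by nlinarith [dotSelfNonneg p, dotSelfNonneg q])
      set t : ℝ := r / (K * Real.sqrt (1 + R ^ 2)) with htdef
      have hKsqpos : 0 < K * Real.sqrt (1 + R ^ 2) := mul_pos hK hsq
      have ht0 : 0 ≤ t := div_nonneg hr0.le hKsqpos.le
      have htK : t * (K * Real.sqrt (1 + R ^ 2)) = r := div_mul_cancel₀ _ hKsqpos.ne'
      have htl3 : t * l3 ≤ 1 := by
        rw [htdef, div_mul_eq_mul_div, div_le_one hKsqpos]
        calc r * l3 ≤ Real.sqrt (1 + R ^ 2) * K :=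
              mul_le_mul (le_trans hrR hRsq) hl3K hl30 (Real.sqrt_nonneg _)
          _ = K * Real.sqrt (1 + R ^ 2) := mul_comm _ _
      set d1 : Fin n → ℝ := t • (l3 • x - q) with hd1
      set d2 : Fin m → ℝ := t • (l3 • y + p) with hd2
      have hqnn : ∀ i, 0 ≤ q i := fun i => le_max_right _ _
      -- positivity of the candidate point
      have hpos : ∀ i, 0 ≤ (x - d1) i := by
        intro i
        have hd1i : d1 i = t * (l3 * x i - q i) := by
          rw [hd1]; simp [smul_eq_mul]
        simp only [Pi.sub_apply, hd1i]
        nlinarith [mul_nonneg (sub_nonneg.2 htl3) (hz i), mul_nonneg ht0 (hqnn i), hz i,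
          hqnn i, ht0]
      -- norm bound
      have hnzsq : x ⬝ᵥ x + y ⬝ᵥ y = (nrmP (x, y)) ^ 2 :=
        (Real.sq_sqrt (add_nonneg (dotSelfNonneg x) (dotSelfNonneg y))).symm
      have hnz0 : 0 ≤ nrmP (x, y) := Real.sqrt_nonneg _
      set σ : ℝ := Real.sqrt (q ⬝ᵥ q + p ⬝ᵥ p) with hσdef
      have hσ0 : 0 ≤ σ := Real.sqrt_nonneg _
      have hσsq : σ ^ 2 = q ⬝ᵥ q + p ⬝ᵥ p :=
        Real.sq_sqrt (add_nonneg (dotSelfNonneg q) (dotSelfNonneg p))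
      have hcross : y ⬝ᵥ p - x ⬝ᵥ q ≤ σ * nrmP (x, y) := by
        have h := pairCS (-q) x p y
        rw [neg_dotProduct, neg_dotProduct, dotProduct_neg, neg_neg] at h
        rw [dotProduct_comm q x, dotProduct_comm p y] at h
        exact le_trans (by linarith) h
      have hvv_expand : (l3 • x - q) ⬝ᵥ (l3 • x - q) + (l3 • y + p) ⬝ᵥ (l3 • y + p)
          = l3 ^ 2 * (x ⬝ᵥ x + y ⬝ᵥ y) + 2 * l3 * (y ⬝ᵥ p - x ⬝ᵥ q) + (q ⬝ᵥ q + p ⬝ᵥ p) := by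
        simp only [sub_dotProduct, dotProduct_sub, add_dotProduct,
          dotProduct_add, smul_dotProduct, dotProduct_smul, smul_eq_mul]
        rw [dotProduct_comm q x, dotProduct_comm p y]
        ring
      have hvv0 : 0 ≤ (l3 • x - q) ⬝ᵥ (l3 • x - q) + (l3 • y + p) ⬝ᵥ (l3 • y + p) :=
        add_nonneg (dotSelfNonneg _) (dotSelfNonneg _)
      have hvv_le : (l3 • x - q) ⬝ᵥ (l3 • x - q) + (l3 • y + p) ⬝ᵥ (l3 • y + p)
          ≤ (l3 * nrmP (x, y) + σ) ^ 2 := by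
        rw [hvv_expand, hnzsq]
        nlinarith [mul_le_mul_of_nonneg_left hcross (by positivity : (0:ℝ) ≤ 2 * l3), hσsq]
      have hsvv : Real.sqrt ((l3 • x - q) ⬝ᵥ (l3 • x - q) + (l3 • y + p) ⬝ᵥ (l3 • y + p))
          ≤ l3 * nrmP (x, y) + σ := by
        calc _ ≤ Real.sqrt ((l3 * nrmP (x, y) + σ) ^ 2) := Real.sqrt_le_sqrt hvv_le
          _ = _ := Real.sqrt_sq (by positivity)
      have hKσ : Real.sqrt (l3 ^ 2 + σ ^ 2) = K := by
        rw [hKdef]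
        congr 1
        rw [hσsq]; ring
      have hstep : l3 * nrmP (x, y) + σ ≤ K * Real.sqrt (1 + R ^ 2) := by
        have h1 : l3 * nrmP (x, y) + σ ≤ l3 * R + σ * 1 := by
          have := mul_le_mul_of_nonneg_left hR hl30
          linarith
        have h2 := twoCS l3 R σ 1 hl30 hR0.le hσ0 zero_le_one
        rw [hKσ] at h2
        have h3 : Real.sqrt (R ^ 2 + 1 ^ 2) = Real.sqrt (1 + R ^ 2) := by
          rw [one_pow, add_comm]
        rw [h3] at h2
        linarith
      have hdd : d1 ⬝ᵥ d1 + d2 ⬝ᵥ d2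
          = t ^ 2 * ((l3 • x - q) ⬝ᵥ (l3 • x - q) + (l3 • y + p) ⬝ᵥ (l3 • y + p)) := by
        rw [hd1, hd2]
        simp only [smul_dotProduct, dotProduct_smul, smul_eq_mul]
        ring
      have hnormd : nrmP ((x, y) - (x - d1, y - d2)) ≤ r := by
        have hzw : ((x, y) : (Fin n → ℝ) × (Fin m → ℝ)) - (x - d1, y - d2) = (d1, d2) := by
          rw [Prod.mk_sub_mk, sub_sub_cancel, sub_sub_cancel]
        rw [hzw]
        calc nrmP ((d1, d2) : (Fin n → ℝ) × (Fin m → ℝ))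
            = Real.sqrt (t ^ 2 * ((l3 • x - q) ⬝ᵥ (l3 • x - q) + (l3 • y + p) ⬝ᵥ (l3 • y + p)))
              := by simp only [nrmP]; rw [hdd]
          _ = t * Real.sqrt ((l3 • x - q) ⬝ᵥ (l3 • x - q) + (l3 • y + p) ⬝ᵥ (l3 • y + p)) := by
              rw [Real.sqrt_mul (sq_nonneg t), Real.sqrt_sq ht0]
          _ ≤ t * (K * Real.sqrt (1 + R ^ 2)) :=
              mul_le_mul_of_nonneg_left (le_trans hsvv hstep) ht0
          _ = r := htK
      -- value of the gap at the candidate point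
      have hgap := gapEq A b c x d1 y d2
      rw [← hp] at hgap
      have hcq : (c - Aᵀ *ᵥ y) ⬝ᵥ q = -(q ⬝ᵥ q) := by
        have h := dotPosPt (Aᵀ *ᵥ y - c)
        rw [← hq] at h
        have h2 : c - Aᵀ *ᵥ y = -(Aᵀ *ᵥ y - c) := (neg_sub _ _).symm
        rw [h2, neg_dotProduct, h]
      have e1 : (c - Aᵀ *ᵥ y) ⬝ᵥ d1 = t * (l3 * ((c - Aᵀ *ᵥ y) ⬝ᵥ x) + q ⬝ᵥ q) := by
        rw [hd1, dotProduct_smul, dotProduct_sub, dotProduct_smul, hcq,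
          smul_eq_mul, smul_eq_mul]
        ring
      have e2 : p ⬝ᵥ d2 = t * (l3 * (p ⬝ᵥ y) + p ⬝ᵥ p) := by
        rw [hd2, dotProduct_smul, dotProduct_add, dotProduct_smul,
          smul_eq_mul, smul_eq_mul]
      have e3 : (c - Aᵀ *ᵥ y) ⬝ᵥ x + p ⬝ᵥ y = c ⬝ᵥ x - b ⬝ᵥ y := by
        have h1 : (Aᵀ *ᵥ y) ⬝ᵥ x = y ⬝ᵥ (A *ᵥ x) := by
          rw [Matrix.mulVec_transpose, ← Matrix.dotProduct_mulVec]
        have h2 : (A *ᵥ x) ⬝ᵥ y = y ⬝ᵥ (A *ᵥ x) := dotProduct_comm _ _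
        rw [hp]
        simp only [sub_dotProduct]
        linarith
      have e4 : l3 * (c ⬝ᵥ x - b ⬝ᵥ y) = l3 ^ 2 := by rw [hl3]; exact maxMulSelf _
      have hgapval : Lag A b c x (y - d2) - Lag A b c (x - d1) y = t * K ^ 2 := by
        rw [hgap, e1, e2, hKsq]
        linear_combination t * l3 * e3 + t * e4
      apply le_csSup hBdd
      refine ⟨(x - d1, y - d2), hpos, hnormd, ?_⟩
      show 1 / Real.sqrt (1 + R ^ 2) * K = (Lag A b c x (y - d2) - Lag A b c (x - d1) y) / r
      rw [hgapval, htdef]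
      field_simp
  · -- upper bound: rhoGap ≤ distF
    have hdistF : distF A b c (x, y) = sInf (nrmP '' Fop A b c (x, y)) := rfl
    rw [hdistF]
    apply le_csInf ⟨_, Set.mem_image_of_mem nrmP hw0⟩
    rintro b' ⟨v, hv, rfl⟩
    apply csSup_le hSne
    rintro g ⟨w, h1, h2, rfl⟩
    exact key w h1 h2 v hv
end

section
/- Let z^{k+1} = PDHG(z^k) be one PDHG iteration with equal primal and dual step-size η > 0. Then P(z^k − z^{k+1}) ∈ F(z^{k+1}); that is, the PDHG update can be written as the inclusion P(z^k − z^{k+1}) ∈ F(z^{k+1}), exhibiting PDHG as a preconditioned proximal point step. -/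
open Matrix
open scoped BigOperators

/-! The primal update `x⁺` is the projection of `v = x + ηAᵀy − ηc` onto `ℝ₊ⁿ`, so the residual
`(v − x⁺)/η` lies in the normal cone `N_{ℝ₊ⁿ}(x⁺)`; with `g := (v − x⁺)/η` both components of
`P(zᵏ − zᵏ⁺¹)` match those of `F(zᵏ⁺¹)` by linear algebra alone. -/

theorem sub_max_zero_mul_sub_max_zero_nonpos (a : ℝ) {u : ℝ} (hu : 0 ≤ u) :
    (a - max a 0) * (u - max a 0) ≤ 0 := by
  rcases le_total 0 a with ha | ha
  · simp [max_eq_left ha]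
  · rw [max_eq_right ha, sub_zero, sub_zero]
    exact mul_nonpos_of_nonpos_of_nonneg ha hu

theorem sub_posPt_dotProduct_sub_posPt_nonpos {k : ℕ} (v u : Fin k → ℝ) (hu : ∀ i, 0 ≤ u i) :
    (v - posPt v) ⬝ᵥ (u - posPt v) ≤ 0 :=
  Finset.sum_nonpos fun i _ => sub_max_zero_mul_sub_max_zero_nonpos (v i) (hu i)

theorem Papply_sub_pdhgStep {n m : ℕ} (A : Matrix (Fin m) (Fin n) ℝ) (b : Fin m → ℝ)
    (c : Fin n → ℝ) {η : ℝ} (hη : η ≠ 0) (z : (Fin n → ℝ) × (Fin m → ℝ)) :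
    let v := z.1 + η • (Aᵀ *ᵥ z.2) - η • c
    Papply A η (z - pdhgStep A b c η z) =
      (c - Aᵀ *ᵥ (pdhgStep A b c η z).2 + (1 / η) • (v - posPt v),
        A *ᵥ (pdhgStep A b c η z).1 - b) := by
  ext i <;>
  · simp only [Papply, pdhgStep, one_div, Prod.fst_sub, Prod.snd_sub, mulVec_sub, mulVec_add,
      mulVec_smul, mulVec_mulVec, Pi.add_apply, Pi.sub_apply, Pi.smul_apply, smul_eq_mul]
    field_simp
    ring

/-- the PDHG update with step-size `η > 0` satisfies the inclusion
`P(zᵏ − zᵏ⁺¹) ∈ F(zᵏ⁺¹)`, exhibiting PDHG as a preconditioned proximal point step. -/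
theorem stmt2 {n m : ℕ} (A : Matrix (Fin m) (Fin n) ℝ) (b : Fin m → ℝ) (c : Fin n → ℝ)
    (η : ℝ) (hη0 : 0 < η)
    (zk zk1 : (Fin n → ℝ) × (Fin m → ℝ)) (hstep : zk1 = pdhgStep A b c η zk) :
    Papply A η (zk - zk1) ∈ Fop A b c zk1 := by
  subst hstep
  set v := zk.1 + η • (Aᵀ *ᵥ zk.2) - η • c
  refine ⟨fun i => le_max_right (v i) 0, (1 / η) • (v - posPt v), fun u hu => ?_,
    Papply_sub_pdhgStep A b c hη0.ne' zk⟩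
  rw [smul_dotProduct, smul_eq_mul]
  exact mul_nonpos_of_nonneg_of_nonpos (by positivity)
    (sub_posPt_dotProduct_sub_posPt_nonpos v u hu)
end

section
/- Let {z^k = (x^k, y^k)} be PDHG iterates with step-size η < 1/‖A‖₂. Then for every k ≥ 0 and every z = (x,y) with x ≥ 0, L(x^{k+1}, y) − L(x, y^{k+1}) ≤ (1/2)‖z^k − z‖_P² − (1/2)‖z^{k+1} − z‖_P². -/
open Matrix
open scoped BigOperators

/-! The `x`-update projects onto `ℝ₊ⁿ`, so its variational inequality controls
`⟨(x⁺ - x)/η + c - Aᵀy, x̂ - x⁺⟩` for every `x̂ ≥ 0`, while the `y`-update says exactly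
`(y - y⁺)/η = A(2x⁺ - x) - b`. Adding the two, the gap `L(x⁺, ŷ) - L(x̂, y⁺)` is at most
`⟨z - z⁺, P(z⁺ - ẑ)⟩`, which by polarization equals
`½‖z - ẑ‖²_P - ½‖z⁺ - ẑ‖²_P - ½‖z - z⁺‖²_P`. The last term is nonpositive because `P ⪰ 0`
once `η‖A‖₂ ≤ 1`: by Cauchy–Schwarz, `wᵀPw ≥ (‖w₁‖ - ‖w₂‖)²/η`. -/

open scoped Matrix.Norms.L2Operator

theorem nrm_eq_norm_toLp {k : ℕ} (v : Fin k → ℝ) :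
    nrm v = ‖(WithLp.toLp 2 v : EuclideanSpace ℝ (Fin k))‖ := by
  rw [norm_eq_sqrt_real_inner, EuclideanSpace.inner_toLp_toLp, star_trivial, nrm]

theorem nrm_nonneg {k : ℕ} (v : Fin k → ℝ) : 0 ≤ nrm v := Real.sqrt_nonneg _

theorem nrm_sq {k : ℕ} (v : Fin k → ℝ) : nrm v ^ 2 = v ⬝ᵥ v :=
  Real.sq_sqrt (Finset.sum_nonneg fun i _ => mul_self_nonneg (v i))

theorem abs_dotProduct_le_nrm_mul_nrm {k : ℕ} (v w : Fin k → ℝ) :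
    |v ⬝ᵥ w| ≤ nrm v * nrm w := by
  simpa [nrm_eq_norm_toLp, EuclideanSpace.inner_toLp_toLp, dotProduct_comm, mul_comm]
    using abs_real_inner_le_norm (WithLp.toLp 2 v : EuclideanSpace ℝ (Fin k)) (WithLp.toLp 2 w)

theorem nrm_smul {k : ℕ} (r : ℝ) (v : Fin k → ℝ) : nrm (r • v) = |r| * nrm v := by
  simp only [nrm_eq_norm_toLp, WithLp.toLp_smul, norm_smul, Real.norm_eq_abs]

theorem bddAbove_specNorm_set {n m : ℕ} (A : Matrix (Fin m) (Fin n) ℝ) :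
    BddAbove {r | ∃ x : Fin n → ℝ, nrm x = 1 ∧ r = nrm (A *ᵥ x)} := by
  refine ⟨‖A‖, ?_⟩
  rintro r ⟨x, hx, rfl⟩
  have := Matrix.l2_opNorm_mulVec A (WithLp.toLp 2 x)
  rw [nrm_eq_norm_toLp] at hx ⊢
  simpa [hx] using this

theorem nrm_mulVec_le {n m : ℕ} (A : Matrix (Fin m) (Fin n) ℝ) (u : Fin n → ℝ) :
    nrm (A *ᵥ u) ≤ specNorm A * nrm u := by
  rcases (nrm_nonneg u).eq_or_lt with hu | hu
  · obtain rfl : u = 0 := by simpa [nrm_eq_norm_toLp] using hu.symm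
    simp [nrm]
  · have hunit : nrm ((nrm u)⁻¹ • u) = 1 := by
      rw [nrm_smul, abs_of_pos (inv_pos.2 hu), inv_mul_cancel₀ hu.ne']
    have := le_csSup (bddAbove_specNorm_set A) ⟨_, hunit, rfl⟩
    rw [Matrix.mulVec_smul, nrm_smul, abs_of_pos (inv_pos.2 hu), inv_mul_le_iff₀ hu] at this
    rwa [mul_comm] at this

section PForm

variable {n m : ℕ} (A : Matrix (Fin m) (Fin n) ℝ) (η : ℝ)

noncomputable def Pinner (u v : (Fin n → ℝ) × (Fin m → ℝ)) : ℝ :=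
  u.1 ⬝ᵥ (Papply A η v).1 + u.2 ⬝ᵥ (Papply A η v).2

theorem Pquad_sub_Pquad (u v : (Fin n → ℝ) × (Fin m → ℝ)) :
    Pquad A η u - Pquad A η v = Pquad A η (u - v) + 2 * Pinner A η (u - v) v := by
  simp only [Pquad, Pinner, Papply, Prod.fst_sub, Prod.snd_sub, mulVec_sub, dotProduct_add,
    sub_dotProduct, dotProduct_sub, dotProduct_smul, smul_eq_mul, mulVec_transpose,
    dotProduct_mulVec, sub_vecMul]
  simp only [dotProduct_comm]
  ring

theorem Pquad_nonneg (hη : 0 < η) (hA : specNorm A ≤ 1 / η) (w : (Fin n → ℝ) × (Fin m → ℝ)) :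
    0 ≤ Pquad A η w := by
  set a := nrm w.1
  set b := nrm w.2
  have hcross : -(b * a / η) ≤ w.2 ⬝ᵥ (A *ᵥ w.1) := by
    have hAw : nrm (A *ᵥ w.1) ≤ a / η := by
      calc nrm (A *ᵥ w.1) ≤ specNorm A * a := nrm_mulVec_le A w.1
        _ ≤ 1 / η * a := by gcongr; exact nrm_nonneg _
        _ = a / η := by ring
    calc -(b * a / η) ≤ -(b * nrm (A *ᵥ w.1)) := by
          rw [mul_div_assoc]; gcongr; exact nrm_nonneg _
      _ ≤ -|w.2 ⬝ᵥ (A *ᵥ w.1)| := neg_le_neg (abs_dotProduct_le_nrm_mul_nrm _ _)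
      _ ≤ _ := neg_abs_le _
  calc 0 ≤ (a - b) ^ 2 / η := by positivity
    _ = 1 / η * a ^ 2 - 2 * (b * a / η) + 1 / η * b ^ 2 := by ring
    _ ≤ Pquad A η w := by
      rw [Pquad, ← nrm_sq, ← nrm_sq]; linarith

end PForm

theorem posPt_sub_dotProduct_nonneg {k : ℕ} (v u : Fin k → ℝ) (hu : ∀ i, 0 ≤ u i) :
    0 ≤ (posPt v - v) ⬝ᵥ (u - posPt v) := by
  refine Finset.sum_nonneg fun i _ => ?_
  simp only [posPt, Pi.sub_apply]
  rcases le_total (v i) 0 with h | h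
  · rw [max_eq_right h]; nlinarith [hu i]
  · simp [max_eq_left h]

section PDHG

variable {n m : ℕ} (A : Matrix (Fin m) (Fin n) ℝ) (b : Fin m → ℝ) (c : Fin n → ℝ) (η : ℝ)

theorem Lag_sub_Lag_le_Pinner (z z' w : (Fin n → ℝ) × (Fin m → ℝ))
    (hprimal : 0 ≤ ((1 / η) • (z'.1 - z.1) + (c - Aᵀ *ᵥ z.2)) ⬝ᵥ (w.1 - z'.1))
    (hdual : (1 / η) • (z.2 - z'.2) = A *ᵥ ((2 : ℝ) • z'.1 - z.1) - b) :
    Lag A b c z'.1 w.2 - Lag A b c w.1 z'.2 ≤ Pinner A η (z - z') (z' - w) := by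
  have hdual' := congrArg ((z'.2 - w.2) ⬝ᵥ ·) hdual
  simp only [Lag, Pinner, Papply, Prod.fst_sub, Prod.snd_sub, mulVec_sub, mulVec_smul,
    add_dotProduct, dotProduct_add, sub_dotProduct, dotProduct_sub, smul_dotProduct,
    dotProduct_smul, smul_eq_mul, mulVec_transpose, dotProduct_mulVec, sub_vecMul]
    at hprimal hdual' ⊢
  simp only [dotProduct_comm] at hprimal hdual' ⊢
  linarith

theorem pdhgStep_fst_variational (hη : 0 < η) (z : (Fin n → ℝ) × (Fin m → ℝ))
    (u : Fin n → ℝ) (hu : ∀ i, 0 ≤ u i) :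
    0 ≤ ((1 / η) • ((pdhgStep A b c η z).1 - z.1) + (c - Aᵀ *ᵥ z.2)) ⬝ᵥ
      (u - (pdhgStep A b c η z).1) := by
  set v := z.1 + η • (Aᵀ *ᵥ z.2) - η • c
  have hv : posPt v - v = η • ((1 / η) • (posPt v - z.1) + (c - Aᵀ *ᵥ z.2)) := by
    rw [smul_add, smul_smul, mul_one_div_cancel hη.ne', one_smul]
    simp only [v, smul_sub]
    abel
  have := posPt_sub_dotProduct_nonneg v u hu
  rw [hv, smul_dotProduct, smul_eq_mul] at this
  exact nonneg_of_mul_nonneg_right this hη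

theorem pdhgStep_snd (hη : η ≠ 0) (z : (Fin n → ℝ) × (Fin m → ℝ)) :
    (1 / η) • (z.2 - (pdhgStep A b c η z).2) =
      A *ᵥ ((2 : ℝ) • (pdhgStep A b c η z).1 - z.1) - b := by
  have hdiff : z.2 - (pdhgStep A b c η z).2 =
      η • (A *ᵥ ((2 : ℝ) • (pdhgStep A b c η z).1 - z.1) - b) := by
    rw [smul_sub]; simp only [pdhgStep]; abel
  rw [hdiff, smul_smul, one_div_mul_cancel hη, one_smul]

theorem pdhgStep_Lag_sub_Lag_le (hη : 0 < η) (z w : (Fin n → ℝ) × (Fin m → ℝ))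
    (hw : ∀ i, 0 ≤ w.1 i) :
    Lag A b c (pdhgStep A b c η z).1 w.2 - Lag A b c w.1 (pdhgStep A b c η z).2 ≤
      (1 / 2) * Pquad A η (z - w) - (1 / 2) * Pquad A η (pdhgStep A b c η z - w) -
        (1 / 2) * Pquad A η (z - pdhgStep A b c η z) := by
  have hgap := Lag_sub_Lag_le_Pinner A b c η z (pdhgStep A b c η z) w
    (pdhgStep_fst_variational A b c η hη z w.1 hw) (pdhgStep_snd A b c η hη.ne' z)
  have hpol := Pquad_sub_Pquad A η (z - w) (pdhgStep A b c η z - w)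
  rw [sub_sub_sub_cancel_right] at hpol
  linarith

end PDHG

/-- PDHG iterates with `η < 1/‖A‖₂` satisfy, for every `k ≥ 0` and
every `z = (x,y)` with `x ≥ 0`,
`L(xᵏ⁺¹, y) − L(x, yᵏ⁺¹) ≤ ½‖zᵏ − z‖_P² − ½‖zᵏ⁺¹ − z‖_P²`. -/
theorem stmt3 {n m : ℕ} (A : Matrix (Fin m) (Fin n) ℝ) (b : Fin m → ℝ) (c : Fin n → ℝ)
    (η : ℝ) (hη0 : 0 < η) (hη : η < 1 / specNorm A)
    (z : ℕ → (Fin n → ℝ) × (Fin m → ℝ))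
    (hiter : ∀ k : ℕ, z (k + 1) = pdhgStep A b c η (z k)) :
    ∀ k : ℕ, ∀ w : (Fin n → ℝ) × (Fin m → ℝ), (∀ i, 0 ≤ w.1 i) →
      Lag A b c (z (k + 1)).1 w.2 - Lag A b c w.1 (z (k + 1)).2 ≤
        (1 / 2) * (Pnorm A η (z k - w)) ^ 2 - (1 / 2) * (Pnorm A η (z (k + 1) - w)) ^ 2 := by
  intro k w hw
  have hA : specNorm A ≤ 1 / η := by
    have hA0 : 0 < specNorm A := by
      by_contra! h
      linarith [one_div_nonpos.2 h]
    exact ((lt_one_div hη0 hA0).1 hη).le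
  have hPnorm_sq : ∀ u, Pnorm A η u ^ 2 = Pquad A η u := fun u =>
    Real.sq_sqrt (Pquad_nonneg A η hη0 hA u)
  rw [hPnorm_sq, hPnorm_sq, hiter k]
  linarith [pdhgStep_Lag_sub_Lag_le A b c η hη0 (z k) w hw,
    Pquad_nonneg A η hη0 hA (z k - pdhgStep A b c η (z k))]
end

section
/- Let {z^k = (x^k, y^k)} be PDHG iterates with step-size η < 1/‖A‖₂ started from z^0 = (x^0, y^0), and let z̄^k = (x̄^k, ȳ^k) = (1/k)·Σ_{i=1}^k z^i be the average iterate. Then for every k ≥ 1 and every z = (x,y) with x ≥ 0, L(x̄^k, y) − L(x, ȳ^k) ≤ (1/(2k))·‖z − z^0‖_P². -/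
open Matrix
open scoped BigOperators

namespace PDHGaux
open Matrix

lemma dp_nonneg {k : ℕ} (v : Fin k → ℝ) : 0 ≤ v ⬝ᵥ v :=
  Finset.sum_nonneg fun _ _ => mul_self_nonneg _

lemma nrm_sq {k : ℕ} (v : Fin k → ℝ) : nrm v ^ 2 = v ⬝ᵥ v :=
  Real.sq_sqrt (dp_nonneg v)

lemma nrm_nonneg {k : ℕ} (v : Fin k → ℝ) : 0 ≤ nrm v := Real.sqrt_nonneg _

lemma cauchy_sq {k : ℕ} (v w : Fin k → ℝ) : (v ⬝ᵥ w) ^ 2 ≤ (v ⬝ᵥ v) * (w ⬝ᵥ w) := by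
  have h := Finset.sum_mul_sq_le_sq_mul_sq Finset.univ v w
  simp only [dotProduct]
  simp only [pow_two] at h ⊢
  exact h

lemma abs_dp_le {k : ℕ} (v w : Fin k → ℝ) : |v ⬝ᵥ w| ≤ nrm v * nrm w := by
  rw [← Real.sqrt_sq_eq_abs]
  calc Real.sqrt ((v ⬝ᵥ w) ^ 2) ≤ Real.sqrt ((v ⬝ᵥ v) * (w ⬝ᵥ w)) :=
        Real.sqrt_le_sqrt (cauchy_sq v w)
    _ = nrm v * nrm w := Real.sqrt_mul (dp_nonneg v) _

lemma nrm_smul {k : ℕ} (t : ℝ) (v : Fin k → ℝ) : nrm (t • v) = |t| * nrm v := by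
  unfold nrm
  rw [show (t • v) ⬝ᵥ (t • v) = t ^ 2 * (v ⬝ᵥ v) by
    simp [smul_dotProduct, dotProduct_smul, smul_eq_mul]; ring]
  rw [Real.sqrt_mul (sq_nonneg t), Real.sqrt_sq_eq_abs]

lemma dp_self_eq_zero {k : ℕ} {v : Fin k → ℝ} (h : v ⬝ᵥ v = 0) : v = 0 := by
  funext i
  have := (Finset.sum_eq_zero_iff_of_nonneg (fun j _ => mul_self_nonneg (v j))).1 h i
    (Finset.mem_univ i)
  simpa using mul_self_eq_zero.1 this

lemma spec_bdd {n m : ℕ} (A : Matrix (Fin m) (Fin n) ℝ) :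
    BddAbove {r | ∃ x : Fin n → ℝ, nrm x = 1 ∧ r = nrm (A *ᵥ x)} := by
  refine ⟨Real.sqrt (∑ i, ∑ j, A i j ^ 2), ?_⟩
  rintro r ⟨x, hx, rfl⟩
  have hx2 : x ⬝ᵥ x = 1 := by
    have h := nrm_sq x
    rw [hx] at h; linarith
  have hxx : ∑ j, x j ^ 2 = 1 := by
    simpa [dotProduct, pow_two] using hx2
  unfold nrm
  apply Real.sqrt_le_sqrt
  have hrow : ∀ i, (A *ᵥ x) i * (A *ᵥ x) i ≤ ∑ j, A i j ^ 2 := by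
    intro i
    have h := Finset.sum_mul_sq_le_sq_mul_sq Finset.univ (A i) x
    rw [hxx, mul_one] at h
    calc (A *ᵥ x) i * (A *ᵥ x) i = (∑ j, A i j * x j) ^ 2 := by
          simp [Matrix.mulVec, dotProduct, pow_two]
      _ ≤ ∑ j, A i j ^ 2 := h
  calc (A *ᵥ x) ⬝ᵥ (A *ᵥ x) = ∑ i, (A *ᵥ x) i * (A *ᵥ x) i := rfl
    _ ≤ ∑ i, ∑ j, A i j ^ 2 := Finset.sum_le_sum fun i _ => hrow i

lemma mulVec_le_spec {n m : ℕ} (A : Matrix (Fin m) (Fin n) ℝ) (x : Fin n → ℝ) :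
    nrm (A *ᵥ x) ≤ specNorm A * nrm x := by
  rcases eq_or_ne (nrm x) 0 with h0 | h0
  · have hxx : x ⬝ᵥ x = 0 := by
      have := nrm_sq x; rw [h0] at this; linarith
    have hx0 : x = 0 := dp_self_eq_zero hxx
    subst hx0
    simp [h0, nrm, Matrix.mulVec_zero]
  · have hpos : 0 < nrm x := lt_of_le_of_ne (nrm_nonneg x) (Ne.symm h0)
    set u := (nrm x)⁻¹ • x with hu
    have hnu : nrm u = 1 := by
      rw [hu, nrm_smul, abs_of_nonneg (inv_nonneg.2 hpos.le), inv_mul_cancel₀ h0]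
    have hle : nrm (A *ᵥ u) ≤ specNorm A :=
      le_csSup (spec_bdd A) ⟨u, hnu, rfl⟩
    have hAu : nrm (A *ᵥ u) = (nrm x)⁻¹ * nrm (A *ᵥ x) := by
      rw [hu, Matrix.mulVec_smul, nrm_smul, abs_of_nonneg (inv_nonneg.2 hpos.le)]
    rw [hAu] at hle
    calc nrm (A *ᵥ x) = nrm x * ((nrm x)⁻¹ * nrm (A *ᵥ x)) := by field_simp
      _ ≤ nrm x * specNorm A := mul_le_mul_of_nonneg_left hle hpos.le
      _ = specNorm A * nrm x := mul_comm _ _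

lemma tdp {n m : ℕ} (A : Matrix (Fin m) (Fin n) ℝ) (q : Fin m → ℝ) (p : Fin n → ℝ) :
    (Aᵀ *ᵥ q) ⬝ᵥ p = q ⬝ᵥ (A *ᵥ p) := by
  rw [Matrix.mulVec_transpose, ← Matrix.dotProduct_mulVec]

lemma tdp' {n m : ℕ} (A : Matrix (Fin m) (Fin n) ℝ) (q : Fin m → ℝ) (p : Fin n → ℝ) :
    p ⬝ᵥ (Aᵀ *ᵥ q) = q ⬝ᵥ (A *ᵥ p) := by
  rw [dotProduct_comm, tdp]

lemma dps {n m : ℕ} (A : Matrix (Fin m) (Fin n) ℝ) (q : Fin m → ℝ) (p : Fin n → ℝ) :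
    q ⬝ᵥ (A *ᵥ p) = (Aᵀ *ᵥ q) ⬝ᵥ p := (tdp A q p).symm

lemma dp_sum {k : ℕ} {ι : Type*} (s : Finset ι) (v : Fin k → ℝ) (f : ι → Fin k → ℝ) :
    v ⬝ᵥ (∑ i ∈ s, f i) = ∑ i ∈ s, v ⬝ᵥ f i := by
  simp only [dotProduct, Finset.sum_apply, Finset.mul_sum]
  exact Finset.sum_comm

lemma sum_dp {k : ℕ} {ι : Type*} (s : Finset ι) (v : Fin k → ℝ) (f : ι → Fin k → ℝ) :
    (∑ i ∈ s, f i) ⬝ᵥ v = ∑ i ∈ s, f i ⬝ᵥ v := by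
  rw [dotProduct_comm, dp_sum]
  simp [dotProduct_comm]

lemma mulVec_sum {n m : ℕ} {ι : Type*} (s : Finset ι) (A : Matrix (Fin m) (Fin n) ℝ)
    (f : ι → Fin n → ℝ) : A *ᵥ (∑ i ∈ s, f i) = ∑ i ∈ s, A *ᵥ f i := by
  funext j
  simp only [Matrix.mulVec, Finset.sum_apply]
  exact dp_sum s (A j) f

lemma pquad_nonneg {n m : ℕ} {A : Matrix (Fin m) (Fin n) ℝ} {η : ℝ} (hη0 : 0 < η)
    (hs : ∀ x, nrm (A *ᵥ x) ≤ (1 / η) * nrm x) (w : (Fin n → ℝ) × (Fin m → ℝ)) :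
    0 ≤ Pquad A η w := by
  unfold Pquad
  have h1 := abs_dp_le w.2 (A *ᵥ w.1)
  have h2 := hs w.1
  have h3 := nrm_sq w.1
  have h4 := nrm_sq w.2
  have h5 := nrm_nonneg w.1
  have h6 := nrm_nonneg w.2
  have h7 := nrm_nonneg (A *ᵥ w.1)
  have h8 : (0:ℝ) < 1 / η := by positivity
  have h9 : -(w.2 ⬝ᵥ (A *ᵥ w.1)) ≤ |w.2 ⬝ᵥ (A *ᵥ w.1)| := neg_le_abs _
  nlinarith [sq_nonneg (nrm w.1 - nrm w.2), mul_le_mul_of_nonneg_left h2 h6]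

lemma step_key {n m : ℕ} (A : Matrix (Fin m) (Fin n) ℝ) (b : Fin m → ℝ) (c : Fin n → ℝ)
    {η : ℝ} (hη : η ≠ 0) (zz ww : (Fin n → ℝ) × (Fin m → ℝ)) :
    Lag A b c (pdhgStep A b c η zz).1 ww.2 - Lag A b c ww.1 (pdhgStep A b c η zz).2 =
      ((Aᵀ *ᵥ zz.2) - c - (1 / η) • ((pdhgStep A b c η zz).1 - zz.1)) ⬝ᵥ
          (ww.1 - (pdhgStep A b c η zz).1)
        + (Pquad A η (ww - zz) / 2 - Pquad A η (ww - pdhgStep A b c η zz) / 2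
            - Pquad A η (zz - pdhgStep A b c η zz) / 2) := by
  obtain ⟨x, y⟩ := zz; obtain ⟨u, v⟩ := ww
  set x' := posPt (x + η • (Aᵀ *ᵥ y) - η • c) with hx'
  have hstep : pdhgStep A b c η (x, y) =
      (x', y - η • (A *ᵥ ((2 : ℝ) • x' - x)) + η • b) := rfl
  rw [hstep]
  simp only [Lag, Pquad, Prod.mk_sub_mk, Prod.fst, Prod.snd,
    Matrix.mulVec_add, Matrix.mulVec_sub, Matrix.mulVec_smul,
    add_dotProduct, dotProduct_add, sub_dotProduct, dotProduct_sub,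
    smul_dotProduct, dotProduct_smul, smul_eq_mul, tdp, tdp', dotProduct_comm]
  field_simp
  ring

lemma proj_ineq {n m : ℕ} (A : Matrix (Fin m) (Fin n) ℝ) (c : Fin n → ℝ)
    {η : ℝ} (hη0 : 0 < η) (x u : Fin n → ℝ) (y : Fin m → ℝ) (hu : ∀ i, 0 ≤ u i) :
    ((Aᵀ *ᵥ y) - c - (1 / η) • (posPt (x + η • (Aᵀ *ᵥ y) - η • c) - x)) ⬝ᵥ
      (u - posPt (x + η • (Aᵀ *ᵥ y) - η • c)) ≤ 0 := by
  apply Finset.sum_nonpos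
  intro i _
  set t := x i + η * (Aᵀ *ᵥ y) i - η * c i with ht
  have hx'i : posPt (x + η • (Aᵀ *ᵥ y) - η • c) i = max t 0 := by
    simp [posPt, ht, Pi.add_apply, Pi.sub_apply, Pi.smul_apply, smul_eq_mul]
  have hgi : ((Aᵀ *ᵥ y) - c - (1 / η) • (posPt (x + η • (Aᵀ *ᵥ y) - η • c) - x)) i
      = (1 / η) * (t - max t 0) := by
    simp only [Pi.sub_apply, Pi.smul_apply, smul_eq_mul, hx'i, ht]
    field_simp
    ring
  rw [hgi, Pi.sub_apply, hx'i]
  rcases le_or_gt 0 t with h | h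
  · rw [max_eq_left h]
    simp
  · rw [max_eq_right h.le]
    have h1 : (1 / η) * (t - 0) ≤ 0 := by
      apply mul_nonpos_of_nonneg_of_nonpos
      · positivity
      · linarith
    have h2 : 0 ≤ u i - 0 := by simpa using hu i
    simpa using mul_nonpos_of_nonpos_of_nonneg (by simpa using h1) h2

lemma step_le {n m : ℕ} (A : Matrix (Fin m) (Fin n) ℝ) (b : Fin m → ℝ) (c : Fin n → ℝ)
    {η : ℝ} (hη0 : 0 < η) (hpsd : ∀ w : (Fin n → ℝ) × (Fin m → ℝ), 0 ≤ Pquad A η w)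
    (zz ww : (Fin n → ℝ) × (Fin m → ℝ)) (hu : ∀ i, 0 ≤ ww.1 i) :
    Lag A b c (pdhgStep A b c η zz).1 ww.2 - Lag A b c ww.1 (pdhgStep A b c η zz).2 ≤
      Pquad A η (ww - zz) / 2 - Pquad A η (ww - pdhgStep A b c η zz) / 2 := by
  rw [step_key A b c hη0.ne' zz ww]
  have h1 : (pdhgStep A b c η zz).1 = posPt (zz.1 + η • (Aᵀ *ᵥ zz.2) - η • c) := rfl
  have h2 := proj_ineq A c hη0 zz.1 ww.1 zz.2 hu
  rw [h1]
  have h3 := hpsd (zz - pdhgStep A b c η zz)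
  linarith

lemma lag_avg {n m : ℕ} (A : Matrix (Fin m) (Fin n) ℝ) (b : Fin m → ℝ) (c : Fin n → ℝ)
    (k : ℕ) (hk : 1 ≤ k) (z : ℕ → (Fin n → ℝ) × (Fin m → ℝ))
    (u : Fin n → ℝ) (v : Fin m → ℝ) :
    Lag A b c (((k : ℝ)⁻¹) • ∑ i ∈ Finset.Icc 1 k, z i).1 v
      - Lag A b c u (((k : ℝ)⁻¹) • ∑ i ∈ Finset.Icc 1 k, z i).2
    = (k : ℝ)⁻¹ * ∑ i ∈ Finset.Icc 1 k, (Lag A b c (z i).1 v - Lag A b c u (z i).2) := by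
  have hk0 : (k : ℝ) ≠ 0 := by
    have : 0 < k := hk
    positivity
  have hcard : (Finset.Icc 1 k).card = k := by
    rw [Nat.card_Icc]; omega
  simp only [Lag, Prod.smul_fst, Prod.smul_snd, Prod.fst_sum, Prod.snd_sum,
    Matrix.mulVec_smul, mulVec_sum, dotProduct_smul, smul_dotProduct, smul_eq_mul,
    dps, dp_sum, sum_dp, Finset.sum_sub_distrib, Finset.sum_add_distrib,
    Finset.sum_const, hcard, nsmul_eq_mul]
  field_simp

end PDHGaux

/-- average-iterate convergence of PDHG with `η < 1/‖A‖₂`: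
`L(x̄ᵏ, y) − L(x, ȳᵏ) ≤ (1/(2k))·‖z − z⁰‖_P²` for all `k ≥ 1` and `z = (x,y)`, `x ≥ 0`. -/
theorem stmt4 {n m : ℕ} (A : Matrix (Fin m) (Fin n) ℝ) (b : Fin m → ℝ) (c : Fin n → ℝ)
    (η : ℝ) (hη0 : 0 < η) (hη : η < 1 / specNorm A)
    (z : ℕ → (Fin n → ℝ) × (Fin m → ℝ))
    (hiter : ∀ k : ℕ, z (k + 1) = pdhgStep A b c η (z k)) :
    ∀ k : ℕ, 1 ≤ k → ∀ w : (Fin n → ℝ) × (Fin m → ℝ), (∀ i, 0 ≤ w.1 i) →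
      Lag A b c (((k : ℝ)⁻¹) • ∑ i ∈ Finset.Icc 1 k, z i).1 w.2
        - Lag A b c w.1 (((k : ℝ)⁻¹) • ∑ i ∈ Finset.Icc 1 k, z i).2 ≤
        (1 / (2 * (k : ℝ))) * (Pnorm A η (w - z 0)) ^ 2 := by
  intro k hk w hw
  have hs0 : 0 < specNorm A := by
    by_contra h
    push_neg at h
    have h1 : 1 / specNorm A ≤ 0 := one_div_nonpos.mpr h
    linarith
  have hmul : η * specNorm A < 1 := by
    have := (lt_div_iff₀ hs0).1 hη
    linarith
  have hsη : specNorm A ≤ 1 / η := by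
    rw [le_div_iff₀ hη0]
    nlinarith
  have hs : ∀ x, nrm (A *ᵥ x) ≤ (1 / η) * nrm x := fun x =>
    le_trans (PDHGaux.mulVec_le_spec A x)
      (mul_le_mul_of_nonneg_right hsη (PDHGaux.nrm_nonneg x))
  have hpsd : ∀ u : (Fin n → ℝ) × (Fin m → ℝ), 0 ≤ Pquad A η u :=
    PDHGaux.pquad_nonneg hη0 hs
  have hstep : ∀ i : ℕ, Lag A b c (z (i + 1)).1 w.2 - Lag A b c w.1 (z (i + 1)).2 ≤
      Pquad A η (w - z i) / 2 - Pquad A η (w - z (i + 1)) / 2 := by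
    intro i
    rw [hiter i]
    exact PDHGaux.step_le A b c hη0 hpsd (z i) w hw
  have hsum : ∑ i ∈ Finset.range k,
      (Lag A b c (z (i + 1)).1 w.2 - Lag A b c w.1 (z (i + 1)).2)
      ≤ Pquad A η (w - z 0) / 2 - Pquad A η (w - z k) / 2 := by
    calc ∑ i ∈ Finset.range k,
          (Lag A b c (z (i + 1)).1 w.2 - Lag A b c w.1 (z (i + 1)).2)
        ≤ ∑ i ∈ Finset.range k,
          (Pquad A η (w - z i) / 2 - Pquad A η (w - z (i + 1)) / 2) :=
          Finset.sum_le_sum fun i _ => hstep i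
      _ = Pquad A η (w - z 0) / 2 - Pquad A η (w - z k) / 2 :=
          Finset.sum_range_sub' (fun i => Pquad A η (w - z i) / 2) k
  have hre : ∑ i ∈ Finset.Icc 1 k, (Lag A b c (z i).1 w.2 - Lag A b c w.1 (z i).2)
      = ∑ i ∈ Finset.range k,
        (Lag A b c (z (i + 1)).1 w.2 - Lag A b c w.1 (z (i + 1)).2) := by
    rw [← Finset.Ico_add_one_right_eq_Icc, Finset.sum_Ico_eq_sum_range]
    simp [add_comm]
  have hk0 : (0 : ℝ) < (k : ℝ) := by
    have : 0 < k := hk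
    exact_mod_cast this
  rw [PDHGaux.lag_avg A b c k hk z w.1 w.2, hre]
  have hQ : Pnorm A η (w - z 0) ^ 2 = Pquad A η (w - z 0) :=
    Real.sq_sqrt (hpsd _)
  rw [hQ]
  have hfin : ∑ i ∈ Finset.range k,
      (Lag A b c (z (i + 1)).1 w.2 - Lag A b c w.1 (z (i + 1)).2)
      ≤ Pquad A η (w - z 0) / 2 := by
    have := hpsd (w - z k)
    linarith
  calc (k : ℝ)⁻¹ * ∑ i ∈ Finset.range k,
        (Lag A b c (z (i + 1)).1 w.2 - Lag A b c w.1 (z (i + 1)).2)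
      ≤ (k : ℝ)⁻¹ * (Pquad A η (w - z 0) / 2) :=
        mul_le_mul_of_nonneg_left hfin (by positivity)
    _ = 1 / (2 * (k : ℝ)) * Pquad A η (w - z 0) := by
        rw [one_div, mul_inv]
        ring
end

section
/- Let {z^k} be PDHG iterates with step-size η < 1/‖A‖₂ started from z^0, and let z* be any saddle point of L over Z. Then for every k ≥ 1, ‖z^{k+1} − z^k‖_P ≤ ‖z^0 − z*‖_P / √k. -/
open Matrix
open scoped BigOperators

namespace Stmt5Aux
open Matrix
variable {n m k : ℕ}

lemma dot_self_nonneg (v : Fin k → ℝ) : 0 ≤ v ⬝ᵥ v :=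
  Finset.sum_nonneg fun _ _ => mul_self_nonneg _

lemma dotT (A : Matrix (Fin m) (Fin n) ℝ) (y : Fin m → ℝ) (v : Fin n → ℝ) :
    (Aᵀ *ᵥ y) ⬝ᵥ v = y ⬝ᵥ (A *ᵥ v) := by
  calc (Aᵀ *ᵥ y) ⬝ᵥ v = v ⬝ᵥ (Aᵀ *ᵥ y) := dotProduct_comm _ _
    _ = (v ᵥ* Aᵀ) ⬝ᵥ y := dotProduct_mulVec _ _ _
    _ = (A *ᵥ v) ⬝ᵥ y := by rw [vecMul_transpose]
    _ = y ⬝ᵥ (A *ᵥ v) := dotProduct_comm _ _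

lemma dotT' (A : Matrix (Fin m) (Fin n) ℝ) (y : Fin m → ℝ) (v : Fin n → ℝ) :
    v ⬝ᵥ (Aᵀ *ᵥ y) = y ⬝ᵥ (A *ᵥ v) := by rw [dotProduct_comm, dotT]

lemma proj_vi (v u : Fin k → ℝ) (hu : ∀ i, 0 ≤ u i) :
    0 ≤ (posPt v - v) ⬝ᵥ (u - posPt v) := by
  apply Finset.sum_nonneg
  intro i _
  simp only [Pi.sub_apply, posPt]
  rcases le_or_gt 0 (v i) with h | h
  · rw [max_eq_left h]; simp
  · rw [max_eq_right h.le]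
    have := hu i
    nlinarith

lemma cs (u v : Fin k → ℝ) : (u ⬝ᵥ v) ^ 2 ≤ (u ⬝ᵥ u) * (v ⬝ᵥ v) := by
  simpa [dotProduct, sq] using Finset.sum_mul_sq_le_sq_mul_sq Finset.univ u v

lemma spec_bound (A : Matrix (Fin m) (Fin n) ℝ) (hσ : 0 < specNorm A) (x : Fin n → ℝ) :
    (A *ᵥ x) ⬝ᵥ (A *ᵥ x) ≤ specNorm A ^ 2 * (x ⬝ᵥ x) := by
  have hbdd : BddAbove {r | ∃ x : Fin n → ℝ, nrm x = 1 ∧ r = nrm (A *ᵥ x)} := by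
    refine ⟨Real.sqrt (∑ i, ∑ j, A i j ^ 2), ?_⟩
    rintro r ⟨x, hx1, rfl⟩
    have hxx : x ⬝ᵥ x = 1 := by
      have h0 := dot_self_nonneg x
      have := Real.sq_sqrt h0
      rw [show Real.sqrt (x ⬝ᵥ x) = 1 from hx1] at this
      linarith [this.symm]
    have hb : (A *ᵥ x) ⬝ᵥ (A *ᵥ x) ≤ ∑ i, ∑ j, A i j ^ 2 := by
      calc (A *ᵥ x) ⬝ᵥ (A *ᵥ x) = ∑ i, (∑ j, A i j * x j) ^ 2 := by
             simp [dotProduct, Matrix.mulVec, sq]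
        _ ≤ ∑ i, (∑ j, A i j ^ 2) * (∑ j, x j ^ 2) := by
             exact Finset.sum_le_sum fun i _ =>
               Finset.sum_mul_sq_le_sq_mul_sq Finset.univ _ _
        _ = (∑ i, ∑ j, A i j ^ 2) * (x ⬝ᵥ x) := by
             rw [← Finset.sum_mul]; congr 1; simp [dotProduct, sq]
        _ = ∑ i, ∑ j, A i j ^ 2 := by rw [hxx, mul_one]
    exact Real.sqrt_le_sqrt hb
  rcases eq_or_lt_of_le (dot_self_nonneg x) with h0 | h0
  · have hx : x = 0 := by
      funext i
      have hsum := (Finset.sum_eq_zero_iff_of_nonneg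
        (fun j (_ : j ∈ Finset.univ) => mul_self_nonneg (x j))).1 h0.symm
      have := hsum i (Finset.mem_univ i)
      simpa using mul_self_eq_zero.mp this
    subst hx
    simp [Matrix.mulVec_zero]
  · set t := x ⬝ᵥ x with ht
    have hr : 0 < Real.sqrt t := Real.sqrt_pos.2 h0
    set r := Real.sqrt t with hrdef
    have hr2 : r ^ 2 = t := Real.sq_sqrt h0.le
    set u := r⁻¹ • x with hu
    have huu : u ⬝ᵥ u = 1 := by
      rw [hu, smul_dotProduct, dotProduct_smul, smul_eq_mul, smul_eq_mul, ← ht]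
      field_simp
      nlinarith [hr2]
    have hmem : nrm (A *ᵥ u) ∈ {r | ∃ x : Fin n → ℝ, nrm x = 1 ∧ r = nrm (A *ᵥ x)} :=
      ⟨u, by rw [nrm, huu, Real.sqrt_one], rfl⟩
    have hle : nrm (A *ᵥ u) ≤ specNorm A := le_csSup hbdd hmem
    have hAu : (A *ᵥ u) ⬝ᵥ (A *ᵥ u) ≤ specNorm A ^ 2 := by
      have h1 := Real.sq_sqrt (dot_self_nonneg (A *ᵥ u))
      have h2 : Real.sqrt ((A *ᵥ u) ⬝ᵥ (A *ᵥ u)) ≤ specNorm A := hle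
      nlinarith [Real.sqrt_nonneg ((A *ᵥ u) ⬝ᵥ (A *ᵥ u))]
    have hxu : x = r • u := by
      rw [hu, smul_smul]
      rw [mul_inv_cancel₀ hr.ne', one_smul]
    rw [hxu, Matrix.mulVec_smul, smul_dotProduct, dotProduct_smul,
      smul_eq_mul, smul_eq_mul]
    nlinarith [hAu, hr2, sq_nonneg (specNorm A), hr.le]

/-- scaled quadratic form `η * wᵀPw` -/
def E (A : Matrix (Fin m) (Fin n) ℝ) (η : ℝ) (a : Fin n → ℝ) (bv : Fin m → ℝ) : ℝ :=
  a ⬝ᵥ a + 2 * η * (bv ⬝ᵥ (A *ᵥ a)) + bv ⬝ᵥ bv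

lemma E_nonneg (A : Matrix (Fin m) (Fin n) ℝ) (η : ℝ) (hη0 : 0 < η)
    (hσ : 0 < specNorm A) (hησ : η * specNorm A < 1)
    (a : Fin n → ℝ) (bv : Fin m → ℝ) : 0 ≤ E A η a bv := by
  set σ := specNorm A with hσdef
  set α := a ⬝ᵥ a with hα
  set β := bv ⬝ᵥ bv with hβ
  set t := bv ⬝ᵥ (A *ᵥ a) with htdef
  have hαn : 0 ≤ α := dot_self_nonneg a
  have hβn : 0 ≤ β := dot_self_nonneg bv
  have hcs : t ^ 2 ≤ β * ((A *ᵥ a) ⬝ᵥ (A *ᵥ a)) := cs bv (A *ᵥ a)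
  have hsp := spec_bound A hσ a
  have hcross : t ^ 2 ≤ σ ^ 2 * α * β := by nlinarith [hβn]
  show 0 ≤ α + 2 * η * t + β
  rcases eq_or_lt_of_le (add_nonneg hαn hβn) with h0 | h0
  · have hα0 : α = 0 := by linarith
    have hβ0 : β = 0 := by linarith
    rw [hα0] at hcross
    have h2 : t ^ 2 = 0 := le_antisymm (by simpa using hcross) (sq_nonneg t)
    have ht0 : t = 0 := sq_eq_zero_iff.mp h2
    simp [hα0, hβ0, ht0]
  · have h7 : (η * σ) ^ 2 ≤ 1 := by nlinarith [mul_pos hη0 hσ]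
    have h5 : 4 * η ^ 2 * t ^ 2 ≤ 4 * (η * σ) ^ 2 * (α * β) := by nlinarith [sq_nonneg η]
    have h6 : 4 * (η * σ) ^ 2 * (α * β) ≤ 4 * (α * β) := by nlinarith [mul_nonneg hαn hβn]
    nlinarith [sq_nonneg (2 * η * t + α + β), sq_nonneg (α - β), h0]

lemma step_key (A : Matrix (Fin m) (Fin n) ℝ) (b : Fin m → ℝ) (c : Fin n → ℝ) (η : ℝ)
    (x u1 : Fin n → ℝ) (y u2 : Fin m → ℝ) (p1 : Fin n → ℝ) (p2 : Fin m → ℝ)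
    (hp1 : p1 = posPt (x + η • (Aᵀ *ᵥ y) - η • c))
    (hp2 : p2 = y - η • (A *ᵥ ((2 : ℝ) • p1 - x)) + η • b)
    (hu : ∀ i, 0 ≤ u1 i) :
    E A η (p1 - u1) (p2 - u2) + E A η (p1 - x) (p2 - y)
      + 2 * η * (Lag A b c p1 u2 - Lag A b c u1 p2) ≤ E A η (x - u1) (y - u2) := by
  have hVI : 0 ≤ (p1 - (x + η • (Aᵀ *ᵥ y) - η • c)) ⬝ᵥ (u1 - p1) := by
    rw [hp1]; exact proj_vi _ _ hu
  subst hp2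
  have key : E A η (x - u1) (y - u2) - E A η (p1 - u1) (y - η • (A *ᵥ ((2 : ℝ) • p1 - x)) + η • b - u2)
      - E A η (p1 - x) (y - η • (A *ᵥ ((2 : ℝ) • p1 - x)) + η • b - y)
      - 2 * η * (Lag A b c p1 u2 - Lag A b c u1 (y - η • (A *ᵥ ((2 : ℝ) • p1 - x)) + η • b))
      = 2 * ((p1 - (x + η • (Aᵀ *ᵥ y) - η • c)) ⬝ᵥ (u1 - p1)) := by
    simp only [E, Lag, Matrix.mulVec_add, Matrix.mulVec_sub, Matrix.mulVec_smul,
      sub_dotProduct, dotProduct_sub, add_dotProduct,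
      dotProduct_add, smul_dotProduct, dotProduct_smul,
      smul_eq_mul, dotT, dotT']
    simp only [dotProduct_comm]
    ring
  linarith

lemma res_key (A : Matrix (Fin m) (Fin n) ℝ) (b : Fin m → ℝ) (c : Fin n → ℝ) (η : ℝ)
    (x : Fin n → ℝ) (y : Fin m → ℝ)
    (p1 : Fin n → ℝ) (p2 : Fin m → ℝ) (q1 : Fin n → ℝ) (q2 : Fin m → ℝ)
    (hp1 : p1 = posPt (x + η • (Aᵀ *ᵥ y) - η • c))
    (hp2 : p2 = y - η • (A *ᵥ ((2 : ℝ) • p1 - x)) + η • b)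
    (hq1 : q1 = posPt (p1 + η • (Aᵀ *ᵥ p2) - η • c))
    (hq2 : q2 = p2 - η • (A *ᵥ ((2 : ℝ) • q1 - p1)) + η • b)
    (hE : ∀ (a : Fin n → ℝ) (bv : Fin m → ℝ), 0 ≤ E A η a bv) :
    E A η (q1 - p1) (q2 - p2) ≤ E A η (p1 - x) (p2 - y) := by
  have hVI1 : 0 ≤ (p1 - (x + η • (Aᵀ *ᵥ y) - η • c)) ⬝ᵥ (q1 - p1) := by
    rw [hp1]; exact proj_vi _ _ (fun i => by rw [hq1]; exact le_max_right _ _)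
  have hVI2 : 0 ≤ (q1 - (p1 + η • (Aᵀ *ᵥ p2) - η • c)) ⬝ᵥ (p1 - q1) := by
    rw [hq1]; exact proj_vi _ _ (fun i => by rw [hp1]; exact le_max_right _ _)
  have hnn : 0 ≤ E A η ((p1 - x) - (q1 - p1)) ((p2 - y) - (q2 - p2)) := hE _ _
  have key : E A η (p1 - x) (p2 - y) - E A η (q1 - p1) (q2 - p2)
      - E A η ((p1 - x) - (q1 - p1)) ((p2 - y) - (q2 - p2))
      = 2 * ((p1 - (x + η • (Aᵀ *ᵥ y) - η • c)) ⬝ᵥ (q1 - p1))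
        + 2 * ((q1 - (p1 + η • (Aᵀ *ᵥ p2) - η • c)) ⬝ᵥ (p1 - q1)) := by
    subst hq2; subst hp2
    simp only [E, Matrix.mulVec_add, Matrix.mulVec_sub, Matrix.mulVec_smul,
      sub_dotProduct, dotProduct_sub, add_dotProduct,
      dotProduct_add, smul_dotProduct, dotProduct_smul,
      smul_eq_mul, dotT, dotT']
    simp only [dotProduct_comm]
    ring
  linarith

end Stmt5Aux

/-- fixed-point residual decay of PDHG with `η < 1/‖A‖₂`: for any
saddle point `z*` and every `k ≥ 1`, `‖zᵏ⁺¹ − zᵏ‖_P ≤ ‖z⁰ − z*‖_P / √k`. -/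
theorem stmt5 {n m : ℕ} (A : Matrix (Fin m) (Fin n) ℝ) (b : Fin m → ℝ) (c : Fin n → ℝ)
    (η : ℝ) (hη0 : 0 < η) (hη : η < 1 / specNorm A)
    (z : ℕ → (Fin n → ℝ) × (Fin m → ℝ))
    (hiter : ∀ k : ℕ, z (k + 1) = pdhgStep A b c η (z k))
    (zs : (Fin n → ℝ) × (Fin m → ℝ)) (hzs : zs ∈ saddleSet A b c) :
    ∀ k : ℕ, 1 ≤ k →
      Pnorm A η (z (k + 1) - z k) ≤ Pnorm A η (z 0 - zs) / Real.sqrt k := by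
  intro k hk
  have hσ : 0 < specNorm A := by
    by_contra h
    push_neg at h
    have : 1 / specNorm A ≤ 0 := one_div_nonpos.mpr h
    linarith
  have hησ : η * specNorm A < 1 := (lt_div_iff₀ hσ).mp hη
  have hE : ∀ (a : Fin n → ℝ) (bv : Fin m → ℝ), 0 ≤ Stmt5Aux.E A η a bv :=
    fun a bv => Stmt5Aux.E_nonneg A η hη0 hσ hησ a bv
  have hp1 : ∀ j : ℕ, (z (j + 1)).1 = posPt ((z j).1 + η • (Aᵀ *ᵥ (z j).2) - η • c) := by
    intro j; rw [hiter j]; rfl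
  have hp2 : ∀ j : ℕ,
      (z (j + 1)).2 = (z j).2 - η • (A *ᵥ ((2 : ℝ) • (z (j + 1)).1 - (z j).1)) + η • b := by
    intro j; rw [hiter j]; rfl
  set Ep : (Fin n → ℝ) × (Fin m → ℝ) → ℝ := fun w => Stmt5Aux.E A η w.1 w.2 with hEp
  have hEpsub : ∀ w w' : (Fin n → ℝ) × (Fin m → ℝ),
      Ep (w - w') = Stmt5Aux.E A η (w.1 - w'.1) (w.2 - w'.2) := fun _ _ => rfl
  obtain ⟨hxs, hLy, hLx⟩ := hzs
  have hstep : ∀ j : ℕ, Ep (z (j + 1) - zs) + Ep (z (j + 1) - z j) ≤ Ep (z j - zs) := by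
    intro j
    have key := Stmt5Aux.step_key A b c η (z j).1 zs.1 (z j).2 zs.2
      (z (j + 1)).1 (z (j + 1)).2 (hp1 j) (hp2 j) hxs
    have hgap : 0 ≤ Lag A b c (z (j + 1)).1 zs.2 - Lag A b c zs.1 (z (j + 1)).2 := by
      have h1 := hLy (z (j + 1)).2
      have h2 := hLx (z (j + 1)).1 (fun i => by rw [hp1 j]; exact le_max_right _ _)
      linarith
    have hgap' : 0 ≤ 2 * η * (Lag A b c (z (j + 1)).1 zs.2 - Lag A b c zs.1 (z (j + 1)).2) := by
      have : (0:ℝ) ≤ 2 * η := by linarith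
      exact mul_nonneg this hgap
    rw [hEpsub, hEpsub, hEpsub]
    linarith
  have hmono : ∀ j : ℕ, Ep (z (j + 2) - z (j + 1)) ≤ Ep (z (j + 1) - z j) := by
    intro j
    rw [hEpsub, hEpsub]
    exact Stmt5Aux.res_key A b c η (z j).1 (z j).2 (z (j + 1)).1 (z (j + 1)).2
      (z (j + 2)).1 (z (j + 2)).2 (hp1 j) (hp2 j) (hp1 (j + 1)) (hp2 (j + 1)) hE
  have hmono' : ∀ i j : ℕ, i ≤ j → Ep (z (j + 1) - z j) ≤ Ep (z (i + 1) - z i) := by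
    intro i j hij
    induction j, hij using Nat.le_induction with
    | base => exact le_refl _
    | succ j hij ih => exact le_trans (hmono j) ih
  have hsum : ∀ K : ℕ,
      Ep (z K - zs) + ∑ j ∈ Finset.range K, Ep (z (j + 1) - z j) ≤ Ep (z 0 - zs) := by
    intro K
    induction K with
    | zero => simp
    | succ K ih =>
      rw [Finset.sum_range_succ]
      have := hstep K
      linarith
  have hEnn : ∀ w w' : (Fin n → ℝ) × (Fin m → ℝ), 0 ≤ Ep (w - w') := by
    intro w w'; rw [hEpsub]; exact hE _ _
  have hkpos : (0 : ℝ) < (k : ℝ) := by exact_mod_cast Nat.pos_of_ne_zero (by omega)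
  have hEk : (k : ℝ) * Ep (z (k + 1) - z k) ≤ Ep (z 0 - zs) := by
    have h1 : (k : ℝ) * Ep (z (k + 1) - z k) = ∑ _j ∈ Finset.range k, Ep (z (k + 1) - z k) := by
      rw [Finset.sum_const, Finset.card_range, nsmul_eq_mul]
    have h2 : ∑ _j ∈ Finset.range k, Ep (z (k + 1) - z k)
        ≤ ∑ j ∈ Finset.range k, Ep (z (j + 1) - z j) := by
      apply Finset.sum_le_sum
      intro j hj
      exact hmono' j k (le_of_lt (Finset.mem_range.1 hj))
    have h3 := hsum k
    have h4 := hEnn (z k) zs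
    linarith
  have hPq : ∀ w : (Fin n → ℝ) × (Fin m → ℝ), Pquad A η w = (1 / η) * Ep w := by
    intro w
    rw [hEp]
    show (1 / η) * (w.1 ⬝ᵥ w.1) + 2 * (w.2 ⬝ᵥ (A *ᵥ w.1)) + (1 / η) * (w.2 ⬝ᵥ w.2)
      = (1 / η) * (w.1 ⬝ᵥ w.1 + 2 * η * (w.2 ⬝ᵥ (A *ᵥ w.1)) + w.2 ⬝ᵥ w.2)
    field_simp
  have hQle : Pquad A η (z (k + 1) - z k) ≤ Pquad A η (z 0 - zs) / (k : ℝ) := by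
    rw [hPq, hPq]
    have hd : Ep (z (k + 1) - z k) ≤ Ep (z 0 - zs) / (k : ℝ) :=
      (le_div_iff₀ hkpos).mpr (by linarith [hEk])
    have h1η : (0:ℝ) ≤ 1 / η := by positivity
    calc (1 / η) * Ep (z (k + 1) - z k) ≤ (1 / η) * (Ep (z 0 - zs) / (k : ℝ)) :=
          mul_le_mul_of_nonneg_left hd h1η
      _ = (1 / η) * Ep (z 0 - zs) / (k : ℝ) := by ring
  have hQ0 : 0 ≤ Pquad A η (z 0 - zs) := by
    rw [hPq]
    exact mul_nonneg (by positivity) (hEnn (z 0) zs)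
  show Real.sqrt (Pquad A η (z (k + 1) - z k)) ≤ Real.sqrt (Pquad A η (z 0 - zs)) / Real.sqrt k
  calc Real.sqrt (Pquad A η (z (k + 1) - z k))
      ≤ Real.sqrt (Pquad A η (z 0 - zs) / (k : ℝ)) := Real.sqrt_le_sqrt hQle
    _ = Real.sqrt (Pquad A η (z 0 - zs)) / Real.sqrt (k : ℝ) := Real.sqrt_div hQ0 _
end

section
/- Let {z^k = (x^k, y^k)} be PDHG iterates with step-size η < 1/‖A‖₂ started from z^0, and let z* be any saddle point of L over Z. Then for every k ≥ 1 and every z = (x,y) with x ≥ 0, L(x^k, y) − L(x, y^k) ≤ (1/√k)·(‖z^0 − z*‖_P² + ‖z^0 − z*‖_P·‖z* − z‖_P). -/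
open Matrix
open scoped BigOperators

noncomputable section
namespace PDHGAux
open Matrix

lemma dp_self_nonneg {k : ℕ} (v : Fin k → ℝ) : 0 ≤ v ⬝ᵥ v :=
  Finset.sum_nonneg fun _ _ => mul_self_nonneg _

lemma nrm_nonneg {k : ℕ} (v : Fin k → ℝ) : 0 ≤ nrm v := Real.sqrt_nonneg _

lemma nrm_sq {k : ℕ} (v : Fin k → ℝ) : nrm v ^ 2 = v ⬝ᵥ v := by
  rw [nrm, Real.sq_sqrt (dp_self_nonneg v)]

lemma dp_le_nrm {k : ℕ} (u v : Fin k → ℝ) : u ⬝ᵥ v ≤ nrm u * nrm v := by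
  have h := Finset.sum_mul_sq_le_sq_mul_sq Finset.univ u v
  have h2 : (u ⬝ᵥ v) ^ 2 ≤ (nrm u * nrm v) ^ 2 := by
    rw [mul_pow, nrm_sq, nrm_sq]
    simpa [dotProduct, pow_two] using h
  have hnn : (0:ℝ) ≤ nrm u * nrm v := mul_nonneg (nrm_nonneg u) (nrm_nonneg v)
  nlinarith [le_abs_self (u ⬝ᵥ v), sq_abs (u ⬝ᵥ v), abs_nonneg (u ⬝ᵥ v)]

lemma nrm_smul {k : ℕ} (t : ℝ) (v : Fin k → ℝ) : nrm (t • v) = |t| * nrm v := by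
  rw [nrm, nrm, smul_dotProduct, dotProduct_smul, smul_eq_mul, smul_eq_mul,
    ← mul_assoc]
  have : t * t = t ^ 2 := (sq t).symm
  rw [this, Real.sqrt_mul (sq_nonneg t), Real.sqrt_sq_eq_abs]

lemma dp_self_zero {k : ℕ} {v : Fin k → ℝ} (h : v ⬝ᵥ v ≤ 0) : v = 0 := by
  have h0 : v ⬝ᵥ v = 0 := le_antisymm h (dp_self_nonneg v)
  funext i
  have hz := (Finset.sum_eq_zero_iff_of_nonneg
    (fun i _ => mul_self_nonneg (v i))).mp h0 i (Finset.mem_univ i)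
  simpa [mul_self_eq_zero] using hz

lemma nrm_eq_zero {k : ℕ} {v : Fin k → ℝ} (h : nrm v = 0) : v = 0 := by
  apply dp_self_zero
  have := nrm_sq v; rw [h] at this; simpa using this.ge

lemma mulVec_le {n m : ℕ} (A : Matrix (Fin m) (Fin n) ℝ) (x : Fin n → ℝ) :
    nrm (A *ᵥ x) ≤ Real.sqrt (∑ i, ∑ j, A i j ^ 2) * nrm x := by
  have key : (A *ᵥ x) ⬝ᵥ (A *ᵥ x) ≤ (∑ i, ∑ j, A i j ^ 2) * (x ⬝ᵥ x) := by
    rw [dotProduct, Finset.sum_mul]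
    apply Finset.sum_le_sum
    intro i _
    have : (A *ᵥ x) i = ∑ j, A i j * x j := rfl
    rw [this]
    have h := Finset.sum_mul_sq_le_sq_mul_sq Finset.univ (fun j => A i j) x
    calc (∑ j, A i j * x j) * (∑ j, A i j * x j) = (∑ j, A i j * x j) ^ 2 := by ring
      _ ≤ (∑ j, A i j ^ 2) * (∑ j, x j ^ 2) := h
      _ = (∑ j, A i j ^ 2) * (x ⬝ᵥ x) := by simp [dotProduct, pow_two]
  rw [nrm]
  calc Real.sqrt ((A *ᵥ x) ⬝ᵥ (A *ᵥ x)) ≤ Real.sqrt ((∑ i, ∑ j, A i j ^ 2) * (x ⬝ᵥ x)) :=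
        Real.sqrt_le_sqrt key
    _ = Real.sqrt (∑ i, ∑ j, A i j ^ 2) * nrm x := by
        rw [Real.sqrt_mul (by positivity), nrm]

lemma specNorm_bound {n m : ℕ} (A : Matrix (Fin m) (Fin n) ℝ) (x : Fin n → ℝ) :
    nrm (A *ᵥ x) ≤ specNorm A * nrm x := by
  rcases eq_or_ne (nrm x) 0 with h0 | h0
  · rw [nrm_eq_zero h0]
    simp [nrm, Matrix.mulVec_zero, zero_dotProduct]
  have hx : 0 < nrm x := lt_of_le_of_ne (nrm_nonneg x) (Ne.symm h0)
  have hbdd : BddAbove {r | ∃ x : Fin n → ℝ, nrm x = 1 ∧ r = nrm (A *ᵥ x)} := by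
    refine ⟨Real.sqrt (∑ i, ∑ j, A i j ^ 2), ?_⟩
    rintro r ⟨u, hu, rfl⟩
    calc nrm (A *ᵥ u) ≤ Real.sqrt (∑ i, ∑ j, A i j ^ 2) * nrm u := mulVec_le A u
      _ = Real.sqrt (∑ i, ∑ j, A i j ^ 2) := by rw [hu, mul_one]
  have hmem : nrm (A *ᵥ ((nrm x)⁻¹ • x)) ∈
      {r | ∃ u : Fin n → ℝ, nrm u = 1 ∧ r = nrm (A *ᵥ u)} := by
    refine ⟨(nrm x)⁻¹ • x, ?_, rfl⟩
    rw [nrm_smul, abs_of_pos (by positivity), inv_mul_cancel₀ h0]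
  have hle := le_csSup hbdd hmem
  rw [Matrix.mulVec_smul, nrm_smul, abs_of_pos (by positivity)] at hle
  rw [specNorm]
  calc nrm (A *ᵥ x) = nrm x * ((nrm x)⁻¹ * nrm (A *ᵥ x)) := by field_simp
    _ ≤ nrm x * sSup {r | ∃ u : Fin n → ℝ, nrm u = 1 ∧ r = nrm (A *ᵥ u)} :=
        mul_le_mul_of_nonneg_left hle (le_of_lt hx)
    _ = _ := mul_comm _ _

variable {n m : ℕ}

/-- The symmetric bilinear form associated to `P`. -/
def Bp (A : Matrix (Fin m) (Fin n) ℝ) (η : ℝ)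
    (a b : (Fin n → ℝ) × (Fin m → ℝ)) : ℝ :=
  (1 / η) * (a.1 ⬝ᵥ b.1) + a.2 ⬝ᵥ (A *ᵥ b.1) + b.2 ⬝ᵥ (A *ᵥ a.1) + (1 / η) * (a.2 ⬝ᵥ b.2)

variable (A : Matrix (Fin m) (Fin n) ℝ) (η : ℝ)

lemma Bp_self (w) : Bp A η w w = Pquad A η w := by
  simp [Bp, Pquad]; ring

lemma Bp_comm (a b) : Bp A η a b = Bp A η b a := by
  simp [Bp, dotProduct_comm a.1 b.1, dotProduct_comm a.2 b.2]; ring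

lemma Bp_add_left (a b c') : Bp A η (a + b) c' = Bp A η a c' + Bp A η b c' := by
  simp [Bp, add_dotProduct, dotProduct_add, Matrix.mulVec_add]; ring

lemma Bp_smul_left (t : ℝ) (a b) : Bp A η (t • a) b = t * Bp A η a b := by
  simp [Bp, smul_dotProduct, dotProduct_smul, Matrix.mulVec_smul]; ring

lemma Bp_add_right (a b c') : Bp A η a (b + c') = Bp A η a b + Bp A η a c' := by
  rw [Bp_comm, Bp_add_left, Bp_comm A η b a, Bp_comm A η c' a]

lemma Bp_sub_left (a b c') : Bp A η (a - b) c' = Bp A η a c' - Bp A η b c' := by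
  have : a - b = a + (-1 : ℝ) • b := by simp [sub_eq_add_neg]
  rw [this, Bp_add_left, Bp_smul_left]; ring

lemma Bp_sub_right (a b c') : Bp A η a (b - c') = Bp A η a b - Bp A η a c' := by
  rw [Bp_comm, Bp_sub_left, Bp_comm A η b a, Bp_comm A η c' a]

lemma quad_expand (a b) : Pquad A η (a + b) = Pquad A η a + 2 * Bp A η a b + Pquad A η b := by
  rw [← Bp_self, ← Bp_self, ← Bp_self, Bp_add_left, Bp_add_right, Bp_add_right, Bp_comm A η b a]
  ring

lemma quad_smul (t : ℝ) (a) : Pquad A η (t • a) = t ^ 2 * Pquad A η a := by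
  rw [← Bp_self, ← Bp_self, Bp_smul_left, Bp_comm, Bp_smul_left, Bp_comm]; ring

lemma polar (a b) : Bp A η a b = (Pquad A η a + Pquad A η b - Pquad A η (a - b)) / 2 := by
  have h := quad_expand A η (a - b) b
  simp only [sub_add_cancel] at h
  rw [Bp_sub_left, Bp_self] at h
  linarith

lemma spec_pos (hη0 : 0 < η) (hη : η < 1 / specNorm A) :
    0 < specNorm A ∧ η * specNorm A < 1 := by
  rcases lt_trichotomy (specNorm A) 0 with h | h | h
  · exact absurd hη (by simp only [not_lt]; nlinarith [div_neg_of_pos_of_neg one_pos h])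
  · rw [h] at hη; simp at hη; linarith
  · exact ⟨h, (lt_div_iff₀ h).mp hη⟩

lemma nrm_neg {k : ℕ} (v : Fin k → ℝ) : nrm (-v) = nrm v := by
  simp [nrm, neg_dotProduct, dotProduct_neg]

lemma quad_nonneg (hη0 : 0 < η) (hη : η < 1 / specNorm A) (w) : 0 ≤ Pquad A η w := by
  obtain ⟨hs, hη1⟩ := spec_pos A η hη0 hη
  have ha : 0 ≤ nrm w.1 := nrm_nonneg _
  have hb : 0 ≤ nrm w.2 := nrm_nonneg _
  have h1 : -(nrm w.2 * (specNorm A * nrm w.1)) ≤ w.2 ⬝ᵥ (A *ᵥ w.1) := by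
    have h2 := dp_le_nrm (-w.2) (A *ᵥ w.1)
    rw [neg_dotProduct, nrm_neg] at h2
    have h3 := specNorm_bound A w.1
    nlinarith [nrm_nonneg (A *ᵥ w.1)]
  have e1 : w.1 ⬝ᵥ w.1 = nrm w.1 ^ 2 := (nrm_sq _).symm
  have e2 : w.2 ⬝ᵥ w.2 = nrm w.2 ^ 2 := (nrm_sq _).symm
  rw [Pquad, e1, e2]
  have hinv : specNorm A < 1 / η := by rw [lt_div_iff₀ hη0]; linarith
  nlinarith [sq_nonneg (nrm w.1 - nrm w.2), mul_nonneg ha hb]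

lemma Pnorm_nonneg (w) : 0 ≤ Pnorm A η w := Real.sqrt_nonneg _

lemma Pnorm_sq (hη0 : 0 < η) (hη : η < 1 / specNorm A) (w) :
    Pnorm A η w ^ 2 = Pquad A η w :=
  Real.sq_sqrt (quad_nonneg A η hη0 hη w)

lemma Bp_CS (hη0 : 0 < η) (hη : η < 1 / specNorm A) (a b) :
    Bp A η a b ≤ Pnorm A η a * Pnorm A η b := by
  have key : ∀ t : ℝ, 0 ≤ Pquad A η a * (t * t) + (2 * Bp A η a b) * t + Pquad A η b := by
    intro t
    have h := quad_nonneg A η hη0 hη (t • a + b)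
    rw [quad_expand, quad_smul, Bp_smul_left] at h
    nlinarith [h]
  have hd := discrim_le_zero key
  rw [discrim] at hd
  have hqa := quad_nonneg A η hη0 hη a
  have hqb := quad_nonneg A η hη0 hη b
  have h2 : (Bp A η a b) ^ 2 ≤ Pquad A η a * Pquad A η b := by nlinarith
  have hr : Real.sqrt (Pquad A η a * Pquad A η b) = Pnorm A η a * Pnorm A η b := by
    rw [Real.sqrt_mul hqa]; rfl
  rw [← hr]
  nlinarith [Real.sq_sqrt (mul_nonneg hqa hqb), Real.sqrt_nonneg (Pquad A η a * Pquad A η b)]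

lemma Pnorm_triangle (hη0 : 0 < η) (hη : η < 1 / specNorm A) (a b) :
    Pnorm A η (a + b) ≤ Pnorm A η a + Pnorm A η b := by
  have h := quad_expand A η a b
  have hcs := Bp_CS A η hη0 hη a b
  have h2 : Pquad A η (a + b) ≤ (Pnorm A η a + Pnorm A η b) ^ 2 := by
    rw [h]
    nlinarith [Pnorm_sq A η hη0 hη a, Pnorm_sq A η hη0 hη b]
  calc Pnorm A η (a + b) = Real.sqrt (Pquad A η (a + b)) := rfl
    _ ≤ Real.sqrt ((Pnorm A η a + Pnorm A η b) ^ 2) := Real.sqrt_le_sqrt h2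
    _ = Pnorm A η a + Pnorm A η b := Real.sqrt_sq (by
        have := Pnorm_nonneg A η a; have := Pnorm_nonneg A η b; linarith)

lemma t1 (v : Fin m → ℝ) (u : Fin n → ℝ) : (Aᵀ *ᵥ v) ⬝ᵥ u = v ⬝ᵥ (A *ᵥ u) := by
  rw [Matrix.dotProduct_mulVec, Matrix.mulVec_transpose]

lemma t2 (v : Fin m → ℝ) (u : Fin n → ℝ) : u ⬝ᵥ (Aᵀ *ᵥ v) = v ⬝ᵥ (A *ᵥ u) := by
  rw [dotProduct_comm, t1]

lemma posPt_nonneg {k : ℕ} (v : Fin k → ℝ) (i : Fin k) : 0 ≤ posPt v i := le_max_right _ _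

lemma proj_ineq {k : ℕ} (p u : Fin k → ℝ) (hu : ∀ i, 0 ≤ u i) :
    0 ≤ (posPt p - p) ⬝ᵥ (u - posPt p) := by
  apply Finset.sum_nonneg
  intro i _
  simp only [Pi.sub_apply, posPt]
  rcases le_or_gt (p i) 0 with h | h
  · rw [max_eq_right h]
    have := hu i
    nlinarith
  · rw [max_eq_left h.le]
    simp

lemma one_step_id (b : Fin m → ℝ) (c : Fin n → ℝ) (hηne : η ≠ 0) (z w : (Fin n → ℝ) × (Fin m → ℝ)) :
    Bp A η (z - pdhgStep A b c η z) (pdhgStep A b c η z - w)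
      - (Lag A b c (pdhgStep A b c η z).1 w.2 - Lag A b c w.1 (pdhgStep A b c η z).2)
    = (1 / η) * (((pdhgStep A b c η z).1 - (z.1 + η • (Aᵀ *ᵥ z.2) - η • c))
        ⬝ᵥ (w.1 - (pdhgStep A b c η z).1)) := by
  obtain ⟨x, y⟩ := z
  obtain ⟨u, v⟩ := w
  simp only [pdhgStep, Bp, Lag]
  set x' := posPt (x + η • (Aᵀ *ᵥ y) - η • c) with hx'
  simp only [Prod.fst_sub, Prod.snd_sub, Prod.fst_add, Prod.snd_add]
  simp only [Matrix.mulVec_add, Matrix.mulVec_sub, Matrix.mulVec_smul,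
    dotProduct_add, add_dotProduct, dotProduct_sub,
    sub_dotProduct, smul_dotProduct, dotProduct_smul,
    smul_eq_mul, t1, t2]
  simp only [dotProduct_comm]
  field_simp
  ring

lemma one_step_ineq (b : Fin m → ℝ) (c : Fin n → ℝ) (hη0 : 0 < η)
    (z w : (Fin n → ℝ) × (Fin m → ℝ)) (hw : ∀ i, 0 ≤ w.1 i) :
    Lag A b c (pdhgStep A b c η z).1 w.2 - Lag A b c w.1 (pdhgStep A b c η z).2
      ≤ Bp A η (z - pdhgStep A b c η z) (pdhgStep A b c η z - w) := by
  have hid := one_step_id A η b c (ne_of_gt hη0) z w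
  have hp : (pdhgStep A b c η z).1 = posPt (z.1 + η • (Aᵀ *ᵥ z.2) - η • c) := rfl
  have hproj := proj_ineq (z.1 + η • (Aᵀ *ᵥ z.2) - η • c) w.1 hw
  rw [← hp] at hproj
  have h1 : (0:ℝ) ≤ 1 / η := by positivity
  nlinarith [mul_nonneg h1 hproj]

/-- Firm nonexpansiveness of the PDHG step in the `P` seminorm. -/
lemma firm (b : Fin m → ℝ) (c : Fin n → ℝ) (hη0 : 0 < η)
    (z z' : (Fin n → ℝ) × (Fin m → ℝ)) :
    Pquad A η (pdhgStep A b c η z - pdhgStep A b c η z')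
      ≤ Bp A η (z - z') (pdhgStep A b c η z - pdhgStep A b c η z') := by
  set T := pdhgStep A b c η
  have h1 := one_step_ineq A η b c hη0 z (T z') (fun i => posPt_nonneg _ i)
  have h2 := one_step_ineq A η b c hη0 z' (T z) (fun i => posPt_nonneg _ i)
  have hsum : 0 ≤ Bp A η (z - T z) (T z - T z') + Bp A η (z' - T z') (T z' - T z) := by
    linarith
  have hneg : T z' - T z = -(T z - T z') := (neg_sub _ _).symm
  rw [hneg] at hsum
  have hBneg : Bp A η (z' - T z') (-(T z - T z')) = - Bp A η (z' - T z') (T z - T z') := by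
    have : -(T z - T z') = (0 : (Fin n → ℝ) × (Fin m → ℝ)) - (T z - T z') := by simp
    rw [this, Bp_sub_right]
    have h0 : Bp A η (z' - T z') 0 = 0 := by
      have : (0 : (Fin n → ℝ) × (Fin m → ℝ)) = (0:ℝ) • (0 : (Fin n → ℝ) × (Fin m → ℝ)) := by simp
      rw [Bp_comm, this, Bp_smul_left]; ring
    rw [h0]; ring
  rw [hBneg] at hsum
  have hexp : Bp A η (z - T z) (T z - T z') - Bp A η (z' - T z') (T z - T z')
      = Bp A η (z - z') (T z - T z') - Bp A η (T z - T z') (T z - T z') := by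
    rw [← Bp_sub_left, ← Bp_sub_left]
    congr 1
    abel
  rw [Bp_self] at hexp
  linarith

/-- A saddle point is a fixed point of the PDHG step. -/
lemma saddle_fixed (b : Fin m → ℝ) (c : Fin n → ℝ) (hη0 : 0 < η)
    (zs : (Fin n → ℝ) × (Fin m → ℝ)) (hzs : zs ∈ saddleSet A b c) :
    pdhgStep A b c η zs = zs := by
  obtain ⟨hpos, hy, hx⟩ := hzs
  -- A x* = b
  have hAb : A *ᵥ zs.1 = b := by
    have h := hy (zs.2 + (b - A *ᵥ zs.1))
    have hgap : Lag A b c zs.1 (zs.2 + (b - A *ᵥ zs.1)) - Lag A b c zs.1 zs.2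
        = (b - A *ᵥ zs.1) ⬝ᵥ (b - A *ᵥ zs.1) := by
      simp only [Lag, add_dotProduct, dotProduct_add, sub_dotProduct,
        dotProduct_sub]
      rw [dotProduct_comm b (A *ᵥ zs.1)]
      ring
    have : (b - A *ᵥ zs.1) ⬝ᵥ (b - A *ᵥ zs.1) ≤ 0 := by linarith
    have := dp_self_zero this
    have : b - A *ᵥ zs.1 = 0 := this
    funext i
    have := congrFun this i
    simp only [Pi.sub_apply, Pi.zero_apply] at this
    linarith
  -- x' = x*
  set p := zs.1 + η • (Aᵀ *ᵥ zs.2) - η • c with hp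
  set q := posPt p with hq
  have hqx : q = zs.1 := by
    have hproj : 0 ≤ (q - p) ⬝ᵥ (zs.1 - q) := proj_ineq p zs.1 hpos
    have hvi0 := hx q (fun i => posPt_nonneg _ i)
    have hvi : 0 ≤ (c - Aᵀ *ᵥ zs.2) ⬝ᵥ (q - zs.1) := by
      have hgap : Lag A b c q zs.2 - Lag A b c zs.1 zs.2
          = (c - Aᵀ *ᵥ zs.2) ⬝ᵥ (q - zs.1) := by
        simp only [Lag, sub_dotProduct, dotProduct_sub, Matrix.mulVec_sub,
          t1, t2]
        rw [dotProduct_comm c q, dotProduct_comm c zs.1]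
        ring
      linarith
    have hxp : (zs.1 - p) ⬝ᵥ (q - zs.1) = η * ((c - Aᵀ *ᵥ zs.2) ⬝ᵥ (q - zs.1)) := by
      rw [hp]
      simp only [sub_dotProduct, add_dotProduct, smul_dotProduct,
        smul_eq_mul]
      ring
    have hsum : (q - zs.1) ⬝ᵥ (q - zs.1) ≤ 0 := by
      have hid : (q - p) ⬝ᵥ (zs.1 - q) + (zs.1 - p) ⬝ᵥ (q - zs.1)
          = -((q - zs.1) ⬝ᵥ (q - zs.1)) := by
        simp only [sub_dotProduct, dotProduct_sub]
        rw [dotProduct_comm q zs.1]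
        ring
      nlinarith [mul_nonneg (le_of_lt hη0) hvi]
    have := dp_self_zero hsum
    funext i
    have := congrFun this i
    simp only [Pi.sub_apply, Pi.zero_apply] at this
    linarith
  -- conclude
  have hy' : zs.2 - η • (A *ᵥ ((2:ℝ) • zs.1 - zs.1)) + η • b = zs.2 := by
    have h2 : (2:ℝ) • zs.1 - zs.1 = zs.1 := by
      funext i; simp [Pi.smul_apply]; ring
    rw [h2, hAb]
    abel
  show (q, zs.2 - η • (A *ᵥ ((2:ℝ) • q - zs.1)) + η • b) = zs
  rw [hqx, hy']

end PDHGAux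
end

/-- last-iterate convergence of PDHG with `η < 1/‖A‖₂`: for any
saddle point `z*`, every `k ≥ 1` and every `z = (x,y)` with `x ≥ 0`,
`L(xᵏ, y) − L(x, yᵏ) ≤ (1/√k)(‖z⁰ − z*‖_P² + ‖z⁰ − z*‖_P·‖z* − z‖_P)`. -/
theorem stmt6 {n m : ℕ} (A : Matrix (Fin m) (Fin n) ℝ) (b : Fin m → ℝ) (c : Fin n → ℝ)
    (η : ℝ) (hη0 : 0 < η) (hη : η < 1 / specNorm A)
    (z : ℕ → (Fin n → ℝ) × (Fin m → ℝ))
    (hiter : ∀ k : ℕ, z (k + 1) = pdhgStep A b c η (z k))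
    (zs : (Fin n → ℝ) × (Fin m → ℝ)) (hzs : zs ∈ saddleSet A b c) :
    ∀ k : ℕ, 1 ≤ k → ∀ w : (Fin n → ℝ) × (Fin m → ℝ), (∀ i, 0 ≤ w.1 i) →
      Lag A b c (z k).1 w.2 - Lag A b c w.1 (z k).2 ≤
        (1 / Real.sqrt k) *
          ((Pnorm A η (z 0 - zs)) ^ 2 + Pnorm A η (z 0 - zs) * Pnorm A η (zs - w)) := by
  intro k hk w hw
  obtain ⟨kk, rfl⟩ : ∃ kk, k = kk + 1 := ⟨k - 1, (Nat.succ_pred_eq_of_pos hk).symm⟩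
  have hfix : pdhgStep A b c η zs = zs := PDHGAux.saddle_fixed A η b c hη0 zs hzs
  set d : ℕ → ℝ := fun i => Pquad A η (z i - z (i+1)) with hd
  set e : ℕ → ℝ := fun i => Pquad A η (z i - zs) with he
  have hq := PDHGAux.quad_nonneg A η hη0 hη
  have h1 : ∀ i, e (i+1) + d i ≤ e i := by
    intro i
    have hfirm := PDHGAux.firm A η b c hη0 (z i) zs
    rw [hfix, ← hiter i] at hfirm
    have hpol := PDHGAux.polar A η (z i - zs) (z (i+1) - zs)
    have hc : (z i - zs) - (z (i+1) - zs) = z i - z (i+1) := by abel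
    rw [hc] at hpol
    rw [hpol] at hfirm
    have hfirm' : e (i+1) ≤ (e i + e (i+1) - d i) / 2 := hfirm
    linarith
  have h2 : ∀ i, d (i+1) ≤ d i := by
    intro i
    have hfirm := PDHGAux.firm A η b c hη0 (z i) (z (i+1))
    rw [← hiter i, ← hiter (i+1)] at hfirm
    have hcs := PDHGAux.Bp_CS A η hη0 hη (z i - z (i+1)) (z (i+1) - z (i+2))
    have hs1 := PDHGAux.Pnorm_sq A η hη0 hη (z i - z (i+1))
    have hs2 := PDHGAux.Pnorm_sq A η hη0 hη (z (i+1) - z (i+2))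
    have hn1 := PDHGAux.Pnorm_nonneg A η (z i - z (i+1))
    have hn2 := PDHGAux.Pnorm_nonneg A η (z (i+1) - z (i+2))
    have hgoal : Pnorm A η (z (i+1) - z (i+2)) ^ 2 ≤ Pnorm A η (z i - z (i+1)) ^ 2 := by
      nlinarith [sq_nonneg (Pnorm A η (z i - z (i+1)) - Pnorm A η (z (i+1) - z (i+2)))]
    rw [hs1, hs2] at hgoal
    exact hgoal
  have h3 : ∀ N, (∑ i ∈ Finset.range N, d i) + e N ≤ e 0 := by
    intro N
    induction N with
    | zero => simp
    | succ N ih =>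
      rw [Finset.sum_range_succ]
      have := h1 N
      linarith
  have haux : ∀ i t, d (i + t) ≤ d i := by
    intro i t
    induction t with
    | zero => simp
    | succ t ih => exact le_trans (h2 (i + t)) ih
  have hmono : ∀ i j, i ≤ j → d j ≤ d i := by
    intro i j hij
    obtain ⟨t, rfl⟩ := Nat.exists_eq_add_of_le hij
    exact haux i t
  have h5 : ((kk:ℝ) + 1) * d kk ≤ e 0 := by
    have hsum_ge : ((kk:ℝ) + 1) * d kk ≤ ∑ i ∈ Finset.range (kk+1), d i := by
      calc ((kk:ℝ) + 1) * d kk = ∑ _i ∈ Finset.range (kk+1), d kk := by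
            rw [Finset.sum_const, Finset.card_range]; push_cast; ring
        _ ≤ ∑ i ∈ Finset.range (kk+1), d i :=
            Finset.sum_le_sum fun i hi => hmono i kk (by
              have := Finset.mem_range.mp hi; omega)
    have h30 := h3 (kk+1)
    have he0 : 0 ≤ e (kk+1) := hq (z (kk+1) - zs)
    have hd0 : 0 ≤ ∑ i ∈ Finset.range kk, d i := Finset.sum_nonneg fun i _ => hq _
    rw [Finset.sum_range_succ] at h30 hsum_ge
    linarith
  have h6 : e (kk+1) ≤ e 0 := by
    have h30 := h3 (kk+1)
    have : 0 ≤ ∑ i ∈ Finset.range (kk+1), d i :=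
      Finset.sum_nonneg fun i _ => hq _
    linarith
  -- final assembly
  have hstep := PDHGAux.one_step_ineq A η b c hη0 (z kk) w hw
  rw [← hiter kk] at hstep
  have hcs := PDHGAux.Bp_CS A η hη0 hη (z kk - z (kk+1)) (z (kk+1) - w)
  have htri : Pnorm A η (z (kk+1) - w) ≤ Pnorm A η (z (kk+1) - zs) + Pnorm A η (zs - w) := by
    have hsplit : z (kk+1) - w = (z (kk+1) - zs) + (zs - w) := by abel
    rw [hsplit]
    exact PDHGAux.Pnorm_triangle A η hη0 hη _ _
  set s0 := Pnorm A η (z 0 - zs) with hs0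
  have hs0nn : 0 ≤ s0 := PDHGAux.Pnorm_nonneg A η _
  have hkpos : (0:ℝ) < Real.sqrt ((kk:ℝ) + 1) := Real.sqrt_pos.mpr (by positivity)
  have hdle : Pnorm A η (z kk - z (kk+1)) ≤ s0 / Real.sqrt ((kk:ℝ) + 1) := by
    have hdk : d kk ≤ e 0 / ((kk:ℝ) + 1) := by
      rw [le_div_iff₀ (by positivity)]
      linarith [h5]
    have : Pnorm A η (z kk - z (kk+1)) = Real.sqrt (d kk) := rfl
    rw [this]
    calc Real.sqrt (d kk) ≤ Real.sqrt (e 0 / ((kk:ℝ) + 1)) := Real.sqrt_le_sqrt hdk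
      _ = Real.sqrt (e 0) / Real.sqrt ((kk:ℝ) + 1) := Real.sqrt_div (hq _) _
      _ = s0 / Real.sqrt ((kk:ℝ) + 1) := rfl
  have hzle : Pnorm A η (z (kk+1) - zs) ≤ s0 := by
    have h01 : Pnorm A η (z (kk+1) - zs) = Real.sqrt (e (kk+1)) := rfl
    have h02 : s0 = Real.sqrt (e 0) := rfl
    rw [h01, h02]
    exact Real.sqrt_le_sqrt h6
  have hwn : 0 ≤ Pnorm A η (zs - w) := PDHGAux.Pnorm_nonneg A η _
  have hchain : Lag A b c (z (kk+1)).1 w.2 - Lag A b c w.1 (z (kk+1)).2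
      ≤ (s0 / Real.sqrt ((kk:ℝ) + 1)) * (s0 + Pnorm A η (zs - w)) := by
    calc Lag A b c (z (kk+1)).1 w.2 - Lag A b c w.1 (z (kk+1)).2
        ≤ PDHGAux.Bp A η (z kk - z (kk+1)) (z (kk+1) - w) := hstep
      _ ≤ Pnorm A η (z kk - z (kk+1)) * Pnorm A η (z (kk+1) - w) := hcs
      _ ≤ (s0 / Real.sqrt ((kk:ℝ) + 1)) * (s0 + Pnorm A η (zs - w)) := by
          apply mul_le_mul hdle (le_trans htri (by linarith)) (PDHGAux.Pnorm_nonneg A η _)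
          positivity
  have hcast : ((kk + 1 : ℕ) : ℝ) = (kk:ℝ) + 1 := by push_cast; ring
  rw [hcast]
  have hfin : (s0 / Real.sqrt ((kk:ℝ) + 1)) * (s0 + Pnorm A η (zs - w))
      = (1 / Real.sqrt ((kk:ℝ) + 1)) * (s0 ^ 2 + s0 * Pnorm A η (zs - w)) := by
    field_simp
  rw [hfin] at hchain
  exact hchain
end
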